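/- arXiv:1904.04988 — 4 statements merged into one kernel-verified Lean document; each statement's English description precedes it below -/
import Mathlib

section
/- Assume a + b < c, and suppose that for some positive integers i, j one has J = (z_1·z_4, z_1^i·z_3^j, z_2^j·z_4^i). Then F(I) = T/J is Cohen–Macaulay in the following sense: there exist elements f, g of the ideal (z_1,z_2,z_3,z_4) of T whose images in T/J form a regular sequence of length 2 on T/J. -/
set_option synthInstance.maxHeartbeats 1000000
set_option maxHeartbeats 1000000
open MvPolynomial
open scoped Pointwise

namespace Stmt14Aux

variable {K : Type*} [Field K]

/-- divisibility by one of the generators of the first monomial ideal -/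
def D1 (i j : ℕ) (m : Fin 4 →₀ ℕ) : Prop :=
  (1 ≤ m 0 ∧ 1 ≤ m 3) ∨ (i ≤ m 0 ∧ j ≤ m 2) ∨ (j ≤ m 1 ∧ i ≤ m 3)

/-- divisibility by one of the generators of the second monomial ideal -/
def D2 (i j : ℕ) (m : Fin 4 →₀ ℕ) : Prop :=
  (1 ≤ m 0 ∧ 1 ≤ m 3) ∨ (i + j ≤ m 0) ∨ (j ≤ m 1 ∧ i ≤ m 3)

lemma pair_le_iff {a b : Fin 4} (hab : a ≠ b) (u v : ℕ) (m : Fin 4 →₀ ℕ) :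
    Finsupp.single a u + Finsupp.single b v ≤ m ↔ u ≤ m a ∧ v ≤ m b := by
  constructor
  · intro h
    constructor
    · have := Finsupp.le_def.mp h a
      rwa [Finsupp.add_apply, Finsupp.single_apply, Finsupp.single_apply, if_pos rfl,
        if_neg (Ne.symm hab), add_zero] at this
    · have := Finsupp.le_def.mp h b
      rwa [Finsupp.add_apply, Finsupp.single_apply, Finsupp.single_apply, if_pos rfl,
        if_neg hab, zero_add] at this
  · rintro ⟨h1, h2⟩
    rw [Finsupp.le_def]
    intro x
    rw [Finsupp.add_apply, Finsupp.single_apply, Finsupp.single_apply]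
    by_cases hax : a = x
    · subst hax
      rw [if_pos rfl, if_neg (Ne.symm hab), add_zero]; exact h1
    · by_cases hbx : b = x
      · subst hbx
        rw [if_neg hax, if_pos rfl, zero_add]; exact h2
      · rw [if_neg hax, if_neg hbx]; simp

/-- The first monomial ideal. -/
noncomputable def J1 (K : Type*) [Field K] (i j : ℕ) : Ideal (MvPolynomial (Fin 4) K) :=
  Ideal.span {X 0 * X 3, X 0 ^ i * X 2 ^ j, X 1 ^ j * X 3 ^ i}

/-- The second monomial ideal. -/
noncomputable def J2 (K : Type*) [Field K] (i j : ℕ) : Ideal (MvPolynomial (Fin 4) K) :=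
  Ideal.span {X 0 * X 3, X 0 ^ (i + j), X 1 ^ j * X 3 ^ i}

lemma memJ1_iff (i j : ℕ) (p : MvPolynomial (Fin 4) K) :
    p ∈ J1 K i j ↔ ∀ m ∈ p.support, D1 i j m := by
  have h1 : (X 0 * X 3 : MvPolynomial (Fin 4) K)
      = monomial (Finsupp.single 0 1 + Finsupp.single 3 1) 1 := by
    rw [X, X, monomial_mul, one_mul]
  have h2 : (X 0 ^ i * X 2 ^ j : MvPolynomial (Fin 4) K)
      = monomial (Finsupp.single 0 i + Finsupp.single 2 j) 1 := by
    rw [X_pow_eq_monomial, X_pow_eq_monomial, monomial_mul, one_mul]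
  have h3 : (X 1 ^ j * X 3 ^ i : MvPolynomial (Fin 4) K)
      = monomial (Finsupp.single 1 j + Finsupp.single 3 i) 1 := by
    rw [X_pow_eq_monomial, X_pow_eq_monomial, monomial_mul, one_mul]
  have himg : ({X 0 * X 3, X 0 ^ i * X 2 ^ j, X 1 ^ j * X 3 ^ i} :
        Set (MvPolynomial (Fin 4) K)) =
      (fun s => (monomial s (1 : K))) '' {Finsupp.single 0 1 + Finsupp.single 3 1,
        Finsupp.single 0 i + Finsupp.single 2 j, Finsupp.single 1 j + Finsupp.single 3 i} := by
    rw [Set.image_insert_eq, Set.image_insert_eq, Set.image_singleton, h1, h2, h3]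
  rw [J1, himg, mem_ideal_span_monomial_image]
  refine forall₂_congr fun m _ => ?_
  constructor
  · rintro ⟨s, hs, hle⟩
    simp only [Set.mem_insert_iff, Set.mem_singleton_iff] at hs
    rcases hs with rfl | rfl | rfl
    · exact Or.inl ((pair_le_iff (by decide) _ _ _).mp hle)
    · exact Or.inr (Or.inl ((pair_le_iff (by decide) _ _ _).mp hle))
    · exact Or.inr (Or.inr ((pair_le_iff (by decide) _ _ _).mp hle))
  · rintro (h | h | h)
    · exact ⟨_, by simp, (pair_le_iff (by decide) _ _ _).mpr h⟩
    · exact ⟨_, by simp, (pair_le_iff (by decide) _ _ _).mpr h⟩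
    · exact ⟨_, by simp, (pair_le_iff (by decide) _ _ _).mpr h⟩

lemma memJ2_iff (i j : ℕ) (p : MvPolynomial (Fin 4) K) :
    p ∈ J2 K i j ↔ ∀ m ∈ p.support, D2 i j m := by
  have h1 : (X 0 * X 3 : MvPolynomial (Fin 4) K)
      = monomial (Finsupp.single 0 1 + Finsupp.single 3 1) 1 := by
    rw [X, X, monomial_mul, one_mul]
  have h2 : (X 0 ^ (i + j) : MvPolynomial (Fin 4) K)
      = monomial (Finsupp.single 0 (i + j)) 1 := X_pow_eq_monomial
  have h3 : (X 1 ^ j * X 3 ^ i : MvPolynomial (Fin 4) K)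
      = monomial (Finsupp.single 1 j + Finsupp.single 3 i) 1 := by
    rw [X_pow_eq_monomial, X_pow_eq_monomial, monomial_mul, one_mul]
  have himg : ({X 0 * X 3, X 0 ^ (i + j), X 1 ^ j * X 3 ^ i} :
        Set (MvPolynomial (Fin 4) K)) =
      (fun s => (monomial s (1 : K))) '' {Finsupp.single 0 1 + Finsupp.single 3 1,
        Finsupp.single 0 (i + j), Finsupp.single 1 j + Finsupp.single 3 i} := by
    rw [Set.image_insert_eq, Set.image_insert_eq, Set.image_singleton, h1, h2, h3]
  rw [J2, himg, mem_ideal_span_monomial_image]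
  refine forall₂_congr fun m _ => ?_
  constructor
  · rintro ⟨s, hs, hle⟩
    simp only [Set.mem_insert_iff, Set.mem_singleton_iff] at hs
    rcases hs with rfl | rfl | rfl
    · exact Or.inl ((pair_le_iff (by decide) _ _ _).mp hle)
    · exact Or.inr (Or.inl (Finsupp.single_le_iff.mp hle))
    · exact Or.inr (Or.inr ((pair_le_iff (by decide) _ _ _).mp hle))
  · rintro (h | h | h)
    · exact ⟨_, by simp, (pair_le_iff (by decide) _ _ _).mpr h⟩
    · exact ⟨_, by simp, Finsupp.single_le_iff.mpr h⟩
    · exact ⟨_, by simp, (pair_le_iff (by decide) _ _ _).mpr h⟩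

lemma app_add_single (m : Fin 4 →₀ ℕ) (a x : Fin 4) (n : ℕ) :
    (m + Finsupp.single a n) x = m x + (if a = x then n else 0) := by
  simp [Finsupp.single_apply]

lemma app_sub_single (m : Fin 4 →₀ ℕ) (a x : Fin 4) (n : ℕ) :
    (m - Finsupp.single a n) x = m x - (if a = x then n else 0) := by
  rw [Finsupp.tsub_apply, Finsupp.single_apply]

lemma key1 {i j : ℕ} (hi : 0 < i) (hj : 0 < j) (p : MvPolynomial (Fin 4) K)
    (H : ∀ μ : Fin 4 →₀ ℕ, ¬ D1 i j μ → coeff μ ((X 0 + X 2) * p) = 0) :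
    ∀ m : Fin 4 →₀ ℕ, ¬ D1 i j m → coeff m p = 0 := by
  classical
  have hexp : ∀ μ : Fin 4 →₀ ℕ, coeff μ ((X 0 + X 2) * p) =
      (if (0 : Fin 4) ∈ μ.support then coeff (μ - Finsupp.single 0 1) p else 0) +
      (if (2 : Fin 4) ∈ μ.support then coeff (μ - Finsupp.single 2 1) p else 0) := by
    intro μ
    rw [add_mul, coeff_add, coeff_X_mul', coeff_X_mul']
  -- right region : m 3 = 0 and m 2 < j
  have R1 : ∀ k (m : Fin 4 →₀ ℕ), m 2 = k → m 3 = 0 → m 2 < j → coeff m p = 0 := by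
    intro k
    induction k with
    | zero =>
      intro m hk h3 hlt
      have hμ : ¬ D1 i j (m + Finsupp.single 0 1) := by
        simp only [D1, app_add_single, Fin.reduceEq, reduceIte]
        omega
      have h := H _ hμ
      rw [hexp,
        if_pos (by simp only [Finsupp.mem_support_iff, app_add_single, Fin.reduceEq,
          reduceIte]; omega),
        if_neg (by simp only [Finsupp.mem_support_iff, app_add_single, Fin.reduceEq,
          reduceIte, not_not]; omega),
        add_tsub_cancel_right, add_zero] at h
      exact h
    | succ k ih =>
      intro m hk h3 hlt
      have hμ : ¬ D1 i j (m + Finsupp.single 0 1) := by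
        simp only [D1, app_add_single, Fin.reduceEq, reduceIte]
        omega
      have h := H _ hμ
      rw [hexp,
        if_pos (by simp only [Finsupp.mem_support_iff, app_add_single, Fin.reduceEq,
          reduceIte]; omega),
        if_pos (by simp only [Finsupp.mem_support_iff, app_add_single, Fin.reduceEq,
          reduceIte]; omega),
        add_tsub_cancel_right] at h
      have hm' : coeff (m + Finsupp.single 0 1 - Finsupp.single 2 1) p = 0 := by
        refine ih _ ?_ ?_ ?_ <;>
          (simp only [app_sub_single, app_add_single, Fin.reduceEq, reduceIte]; omega)
      rw [hm', add_zero] at h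
      exact h
  -- left region
  have L1 : ∀ k (m : Fin 4 →₀ ℕ), m 0 = k → ¬ D1 i j m → (1 ≤ m 3 ∨ j ≤ m 2) →
      coeff m p = 0 := by
    intro k
    induction k with
    | zero =>
      intro m hk hm hbr
      simp only [D1] at hm
      have hμ : ¬ D1 i j (m + Finsupp.single 2 1) := by
        simp only [D1, app_add_single, Fin.reduceEq, reduceIte]
        omega
      have h := H _ hμ
      rw [hexp,
        if_neg (by simp only [Finsupp.mem_support_iff, app_add_single, Fin.reduceEq,
          reduceIte, not_not]; omega),
        if_pos (by simp only [Finsupp.mem_support_iff, app_add_single, Fin.reduceEq,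
          reduceIte]; omega),
        add_tsub_cancel_right, zero_add] at h
      exact h
    | succ k ih =>
      intro m hk hm hbr
      simp only [D1] at hm
      have hm0i : m 0 < i := by omega
      have h3 : m 3 = 0 := by omega
      have hbr' : j ≤ m 2 := by omega
      have hμ : ¬ D1 i j (m + Finsupp.single 2 1) := by
        simp only [D1, app_add_single, Fin.reduceEq, reduceIte]
        omega
      have h := H _ hμ
      rw [hexp,
        if_pos (by simp only [Finsupp.mem_support_iff, app_add_single, Fin.reduceEq,
          reduceIte]; omega),
        if_pos (by simp only [Finsupp.mem_support_iff, app_add_single, Fin.reduceEq,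
          reduceIte]; omega),
        add_tsub_cancel_right] at h
      have hm' : coeff (m + Finsupp.single 2 1 - Finsupp.single 0 1) p = 0 := by
        refine ih _ ?_ ?_ ?_
        · simp only [app_sub_single, app_add_single, Fin.reduceEq, reduceIte]; omega
        · simp only [D1, app_sub_single, app_add_single, Fin.reduceEq, reduceIte]; omega
        · simp only [app_sub_single, app_add_single, Fin.reduceEq, reduceIte]; omega
      rw [hm', zero_add] at h
      exact h
  intro m hm
  by_cases hc : m 3 = 0 ∧ m 2 < j
  · exact R1 (m 2) m rfl hc.1 hc.2
  · refine L1 (m 0) m rfl hm ?_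
    omega

lemma key2 {i j : ℕ} (hi : 0 < i) (hj : 0 < j) (p : MvPolynomial (Fin 4) K)
    (H : ∀ μ : Fin 4 →₀ ℕ, ¬ D2 i j μ → coeff μ ((X 1 + X 3) * p) = 0) :
    ∀ m : Fin 4 →₀ ℕ, ¬ D2 i j m → coeff m p = 0 := by
  classical
  have hexp : ∀ μ : Fin 4 →₀ ℕ, coeff μ ((X 1 + X 3) * p) =
      (if (1 : Fin 4) ∈ μ.support then coeff (μ - Finsupp.single 1 1) p else 0) +
      (if (3 : Fin 4) ∈ μ.support then coeff (μ - Finsupp.single 3 1) p else 0) := by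
    intro μ
    rw [add_mul, coeff_add, coeff_X_mul', coeff_X_mul']
  -- right region : m 0 = 0 and m 1 < j
  have R2 : ∀ k (m : Fin 4 →₀ ℕ), m 1 = k → m 0 = 0 → m 1 < j → coeff m p = 0 := by
    intro k
    induction k with
    | zero =>
      intro m hk h0 hlt
      have hμ : ¬ D2 i j (m + Finsupp.single 3 1) := by
        simp only [D2, app_add_single, Fin.reduceEq, reduceIte]
        omega
      have h := H _ hμ
      rw [hexp,
        if_neg (by simp only [Finsupp.mem_support_iff, app_add_single, Fin.reduceEq,
          reduceIte, not_not]; omega),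
        if_pos (by simp only [Finsupp.mem_support_iff, app_add_single, Fin.reduceEq,
          reduceIte]; omega),
        add_tsub_cancel_right, zero_add] at h
      exact h
    | succ k ih =>
      intro m hk h0 hlt
      have hμ : ¬ D2 i j (m + Finsupp.single 3 1) := by
        simp only [D2, app_add_single, Fin.reduceEq, reduceIte]
        omega
      have h := H _ hμ
      rw [hexp,
        if_pos (by simp only [Finsupp.mem_support_iff, app_add_single, Fin.reduceEq,
          reduceIte]; omega),
        if_pos (by simp only [Finsupp.mem_support_iff, app_add_single, Fin.reduceEq,
          reduceIte]; omega),
        add_tsub_cancel_right] at h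
      have hm' : coeff (m + Finsupp.single 3 1 - Finsupp.single 1 1) p = 0 := by
        refine ih _ ?_ ?_ ?_ <;>
          (simp only [app_sub_single, app_add_single, Fin.reduceEq, reduceIte]; omega)
      rw [hm', zero_add] at h
      exact h
  -- left region
  have L2 : ∀ k (m : Fin 4 →₀ ℕ), m 3 = k → ¬ D2 i j m → (1 ≤ m 0 ∨ j ≤ m 1) →
      coeff m p = 0 := by
    intro k
    induction k with
    | zero =>
      intro m hk hm hbr
      simp only [D2] at hm
      have hμ : ¬ D2 i j (m + Finsupp.single 1 1) := by
        simp only [D2, app_add_single, Fin.reduceEq, reduceIte]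
        omega
      have h := H _ hμ
      rw [hexp,
        if_pos (by simp only [Finsupp.mem_support_iff, app_add_single, Fin.reduceEq,
          reduceIte]; omega),
        if_neg (by simp only [Finsupp.mem_support_iff, app_add_single, Fin.reduceEq,
          reduceIte, not_not]; omega),
        add_tsub_cancel_right, add_zero] at h
      exact h
    | succ k ih =>
      intro m hk hm hbr
      simp only [D2] at hm
      have hm3i : m 3 < i := by omega
      have h0 : m 0 = 0 := by omega
      have hbr' : j ≤ m 1 := by omega
      have hμ : ¬ D2 i j (m + Finsupp.single 1 1) := by
        simp only [D2, app_add_single, Fin.reduceEq, reduceIte]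
        omega
      have h := H _ hμ
      rw [hexp,
        if_pos (by simp only [Finsupp.mem_support_iff, app_add_single, Fin.reduceEq,
          reduceIte]; omega),
        if_pos (by simp only [Finsupp.mem_support_iff, app_add_single, Fin.reduceEq,
          reduceIte]; omega),
        add_tsub_cancel_right] at h
      have hm' : coeff (m + Finsupp.single 1 1 - Finsupp.single 3 1) p = 0 := by
        refine ih _ ?_ ?_ ?_
        · simp only [app_sub_single, app_add_single, Fin.reduceEq, reduceIte]; omega
        · simp only [D2, app_sub_single, app_add_single, Fin.reduceEq, reduceIte]; omega
        · simp only [app_sub_single, app_add_single, Fin.reduceEq, reduceIte]; omega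
      rw [hm', add_zero] at h
      exact h
  intro m hm
  by_cases hc : m 0 = 0 ∧ m 1 < j
  · exact R2 (m 1) m rfl hc.1 hc.2
  · refine L2 (m 3) m rfl hm ?_
    omega

lemma stage1 {i j : ℕ} (hi : 0 < i) (hj : 0 < j) (p : MvPolynomial (Fin 4) K)
    (hp : (X 0 + X 2) * p ∈ J1 K i j) : p ∈ J1 K i j := by
  rw [memJ1_iff] at hp ⊢
  intro m hm
  by_contra hD
  have H : ∀ μ : Fin 4 →₀ ℕ, ¬ D1 i j μ → coeff μ ((X 0 + X 2) * p) = 0 := by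
    intro μ hμ
    by_contra hc
    exact hμ (hp μ (mem_support_iff.mpr hc))
  exact (mem_support_iff.mp hm) (key1 hi hj p H m hD)

lemma stage2_mono {i j : ℕ} (hi : 0 < i) (hj : 0 < j) (p : MvPolynomial (Fin 4) K)
    (hp : (X 1 + X 3) * p ∈ J2 K i j) : p ∈ J2 K i j := by
  rw [memJ2_iff] at hp ⊢
  intro m hm
  by_contra hD
  have H : ∀ μ : Fin 4 →₀ ℕ, ¬ D2 i j μ → coeff μ ((X 1 + X 3) * p) = 0 := by
    intro μ hμ
    by_contra hc
    exact hμ (hp μ (mem_support_iff.mpr hc))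
  exact (mem_support_iff.mp hm) (key2 hi hj p H m hD)

noncomputable def sig (K : Type*) [Field K] :
    MvPolynomial (Fin 4) K →ₐ[K] MvPolynomial (Fin 4) K :=
  aeval (fun k => if k = 2 then - X 0 else X k)

lemma sig_X0 : sig K (X 0) = X 0 := by simp [sig]
lemma sig_X1 : sig K (X 1) = X 1 := by simp [sig]
lemma sig_X2 : sig K (X 2) = - X 0 := by simp [sig]
lemma sig_X3 : sig K (X 3) = X 3 := by simp [sig]

lemma sub_sig_mem (q : MvPolynomial (Fin 4) K) :
    q - sig K q ∈ Ideal.span {(X 0 + X 2 : MvPolynomial (Fin 4) K)} := by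
  induction q using MvPolynomial.induction_on with
  | C a => simp
  | add p q hp hq =>
    have hh : p + q - sig K (p + q) = (p - sig K p) + (q - sig K q) := by
      rw [map_add]; ring
    rw [hh]; exact add_mem hp hq
  | mul_X p n hp =>
    have hXn : X n - sig K (X n) ∈ Ideal.span {(X 0 + X 2 : MvPolynomial (Fin 4) K)} := by
      by_cases h : n = 2
      · subst h
        rw [sig_X2, sub_neg_eq_add, add_comm]
        exact Ideal.subset_span rfl
      · have hs : sig K (X n : MvPolynomial (Fin 4) K) = X n := by simp [sig, h]
        rw [hs, sub_self]
        exact zero_mem _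
    have hh : p * X n - sig K (p * X n) =
        p * (X n - sig K (X n)) + (p - sig K p) * sig K (X n) := by
      rw [map_mul]; ring
    rw [hh]
    exact add_mem (Ideal.mul_mem_left _ _ hXn) (Ideal.mul_mem_right _ _ hp)

lemma stage2 {i j : ℕ} (hi : 0 < i) (hj : 0 < j) (p : MvPolynomial (Fin 4) K)
    (hp : (X 1 + X 3) * p ∈ J1 K i j ⊔ Ideal.span {X 0 + X 2}) :
    p ∈ J1 K i j ⊔ Ideal.span {X 0 + X 2} := by
  have hunion : J1 K i j ⊔ Ideal.span {(X 0 + X 2 : MvPolynomial (Fin 4) K)} =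
      Ideal.span {X 0 * X 3, X 0 ^ i * X 2 ^ j, X 1 ^ j * X 3 ^ i, X 0 + X 2} := by
    rw [J1, ← Ideal.span_union]
    congr 1
    ext x
    simp only [Set.mem_union, Set.mem_insert_iff, Set.mem_singleton_iff]
    tauto
  -- image under sig lands in J2
  have hmap : ∀ q ∈ J1 K i j ⊔ Ideal.span {(X 0 + X 2 : MvPolynomial (Fin 4) K)},
      sig K q ∈ J2 K i j := by
    intro q hq
    rw [hunion] at hq
    have hmem : sig K q ∈ Ideal.map (sig K).toRingHom
        (Ideal.span {(X 0 * X 3 : MvPolynomial (Fin 4) K), X 0 ^ i * X 2 ^ j,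
          X 1 ^ j * X 3 ^ i, X 0 + X 2}) := Ideal.mem_map_of_mem _ hq
    rw [Ideal.map_span] at hmem
    refine Ideal.span_le.mpr ?_ hmem
    rintro x ⟨y, hy, rfl⟩
    simp only [Set.mem_insert_iff, Set.mem_singleton_iff] at hy
    rcases hy with rfl | rfl | rfl | rfl
    · have hh : (sig K).toRingHom (X 0 * X 3 : MvPolynomial (Fin 4) K) = X 0 * X 3 := by
        simp only [AlgHom.toRingHom_eq_coe, RingHom.coe_coe, map_mul, sig_X0, sig_X3]
      rw [hh]
      exact Ideal.subset_span (by simp)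
    · have hh : (sig K).toRingHom (X 0 ^ i * X 2 ^ j : MvPolynomial (Fin 4) K)
          = (-1) ^ j * X 0 ^ (i + j) := by
        simp only [AlgHom.toRingHom_eq_coe, RingHom.coe_coe, map_mul, map_pow, sig_X0, sig_X2]
        rw [neg_pow, pow_add]
        ring
      rw [hh]
      exact Ideal.mul_mem_left _ _ (Ideal.subset_span (by simp))
    · have hh : (sig K).toRingHom (X 1 ^ j * X 3 ^ i : MvPolynomial (Fin 4) K)
          = X 1 ^ j * X 3 ^ i := by
        simp only [AlgHom.toRingHom_eq_coe, RingHom.coe_coe, map_mul, map_pow, sig_X1, sig_X3]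
      rw [hh]
      exact Ideal.subset_span (by simp)
    · have hh : (sig K).toRingHom (X 0 + X 2 : MvPolynomial (Fin 4) K) = 0 := by
        simp only [AlgHom.toRingHom_eq_coe, RingHom.coe_coe, map_add, sig_X0, sig_X2]
        ring
      rw [hh]
      exact zero_mem _
  -- J2 is contained in J1 ⊔ (X0+X2)
  have hJ2le : J2 K i j ≤ J1 K i j ⊔ Ideal.span {(X 0 + X 2 : MvPolynomial (Fin 4) K)} := by
    rw [J2, Ideal.span_le]
    intro x hx
    simp only [Set.mem_insert_iff, Set.mem_singleton_iff] at hx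
    rcases hx with rfl | rfl | rfl
    · exact Ideal.mem_sup_left (Ideal.subset_span (by simp [J1]))
    · obtain ⟨t, ht⟩ := sub_dvd_pow_sub_pow (X 0 : MvPolynomial (Fin 4) K) (- X 2) j
      have hid : (X 0 : MvPolynomial (Fin 4) K) ^ (i + j) =
          (X 0 ^ i * t) * (X 0 + X 2) + (-1) ^ j * (X 0 ^ i * X 2 ^ j) := by
        have h1 : (X 0 : MvPolynomial (Fin 4) K) ^ j - (- X 2) ^ j = (X 0 + X 2) * t := by
          rw [ht]; ring
        have h2 : ((- X 2 : MvPolynomial (Fin 4) K)) ^ j = (-1) ^ j * X 2 ^ j := by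
          rw [neg_pow]
        calc (X 0 : MvPolynomial (Fin 4) K) ^ (i + j)
            = X 0 ^ i * ((X 0 ^ j - (- X 2) ^ j) + (- X 2) ^ j) := by rw [pow_add]; ring
          _ = (X 0 ^ i * t) * (X 0 + X 2) + (-1) ^ j * (X 0 ^ i * X 2 ^ j) := by
              rw [h1, h2]; ring
      rw [hid]
      exact add_mem (Ideal.mem_sup_right (Ideal.mul_mem_left _ _ (Ideal.subset_span rfl)))
        (Ideal.mem_sup_left (Ideal.mul_mem_left _ _ (Ideal.subset_span (by simp [J1]))))
    · exact Ideal.mem_sup_left (Ideal.subset_span (by simp [J1]))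
  -- now run the argument
  have h1 : (X 1 + X 3) * sig K p ∈ J2 K i j := by
    have heq : sig K ((X 1 + X 3) * p) = (X 1 + X 3) * sig K p := by
      rw [map_mul, map_add, sig_X1, sig_X3]
    rw [← heq]
    exact hmap _ hp
  have h2 : sig K p ∈ J2 K i j := stage2_mono hi hj _ h1
  have h3 : p = (p - sig K p) + sig K p := by ring
  rw [h3]
  exact add_mem (Ideal.mem_sup_right (sub_sig_mem p)) (hJ2le h2)

lemma one_not_mem {i j : ℕ} (hi : 0 < i) (hj : 0 < j) :
    (1 : MvPolynomial (Fin 4) K) ∉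
      J1 K i j ⊔ Ideal.span {X 0 + X 2, X 1 + X 3} := by
  intro h
  have hle : J1 K i j ⊔ Ideal.span {(X 0 + X 2 : MvPolynomial (Fin 4) K), X 1 + X 3} ≤
      RingHom.ker (constantCoeff : MvPolynomial (Fin 4) K →+* K) := by
    refine sup_le ?_ ?_
    · rw [J1, Ideal.span_le]
      intro x hx
      simp only [Set.mem_insert_iff, Set.mem_singleton_iff] at hx
      rcases hx with rfl | rfl | rfl <;>
        simp [RingHom.mem_ker, zero_pow hi.ne', zero_pow hj.ne']
    · rw [Ideal.span_le]
      intro x hx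
      simp only [Set.mem_insert_iff, Set.mem_singleton_iff] at hx
      rcases hx with rfl | rfl <;> simp [RingHom.mem_ker]
  have h1 := hle h
  rw [RingHom.mem_ker, map_one] at h1
  exact one_ne_zero h1

end Stmt14Aux

open Stmt14Aux in
theorem stmt_14 {K : Type*} [Field K] (a b c : ℕ)
    (ha : 0 < a) (hab : a < b) (hbc : b < c)
    (hgcd : Nat.gcd a (Nat.gcd b c) = 1)
    (u : Fin 4 → MvPolynomial (Fin 2) K)
    (hu0 : u 0 = X 0 ^ c) (hu1 : u 1 = X 0 ^ b * X 1 ^ a)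
    (hu2 : u 2 = X 0 ^ a * X 1 ^ b) (hu3 : u 3 = X 1 ^ c)
    (I mm : Ideal (MvPolynomial (Fin 2) K))
    (hI : I = Ideal.span {u 0, u 1, u 2, u 3})
    (hmm : mm = Ideal.span {(X 0 : MvPolynomial (Fin 2) K), X 1})
    (J : Ideal (MvPolynomial (Fin 4) K))
    (hJ : ∀ f : MvPolynomial (Fin 4) K,
      f ∈ J ↔ ∀ d : ℕ, aeval u (homogeneousComponent d f) ∈ mm * I ^ d)
    (habc : a + b < c) (i j : ℕ) (hi : 0 < i) (hj : 0 < j)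
    (hJgen : J = Ideal.span {(X 0 * X 3 : MvPolynomial (Fin 4) K), X 0 ^ i * X 2 ^ j,
      X 1 ^ j * X 3 ^ i}) :
    ∃ f g : MvPolynomial (Fin 4) K,
      f ∈ Ideal.span {(X 0 : MvPolynomial (Fin 4) K), X 1, X 2, X 3} ∧
      g ∈ Ideal.span {(X 0 : MvPolynomial (Fin 4) K), X 1, X 2, X 3} ∧
      RingTheory.Sequence.IsRegular (MvPolynomial (Fin 4) K ⧸ J)
        [Ideal.Quotient.mk J f, Ideal.Quotient.mk J g] := by
  have hJ1 : J = J1 K i j := hJgen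
  subst hJ1
  clear hJ hJgen
  refine ⟨X 0 + X 2, X 1 + X 3, ?_, ?_, ?_⟩
  · exact add_mem (Ideal.subset_span (by simp)) (Ideal.subset_span (by simp))
  · exact add_mem (Ideal.subset_span (by simp)) (Ideal.subset_span (by simp))
  rw [RingTheory.Sequence.isRegular_iff]
  constructor
  · -- weakly regular
    refine (RingTheory.Sequence.isWeaklyRegular_cons_iff _ _ _).mpr ⟨?_, ?_⟩
    · -- first element regular
      refine isSMulRegular_iff_right_eq_zero_of_smul.mpr ?_
      intro x hx
      obtain ⟨p, rfl⟩ := Ideal.Quotient.mk_surjective x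
      rw [smul_eq_mul, ← map_mul, Ideal.Quotient.eq_zero_iff_mem] at hx
      rw [Ideal.Quotient.eq_zero_iff_mem]
      exact stage1 hi hj p hx
    · refine (RingTheory.Sequence.isWeaklyRegular_cons_iff _ _ _).mpr ⟨?_, ?_⟩
      · -- second element regular on the quotient
        refine (isSMulRegular_quotient_iff_mem_of_smul_mem _ _).mpr ?_
        intro x hx
        obtain ⟨p, rfl⟩ := Ideal.Quotient.mk_surjective x
        have hN : ((Ideal.Quotient.mk (J1 K i j) (X 0 + X 2)) • ⊤ :
            Submodule (MvPolynomial (Fin 4) K ⧸ J1 K i j)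
              (MvPolynomial (Fin 4) K ⧸ J1 K i j)) =
            Ideal.map (Ideal.Quotient.mk (J1 K i j))
              (Ideal.span {(X 0 + X 2 : MvPolynomial (Fin 4) K)}) := by
          rw [← Submodule.ideal_span_singleton_smul, Submodule.span_smul_eq,
            Submodule.set_smul_top_eq_span, Ideal.map_span, Set.image_singleton]
        rw [hN, smul_eq_mul, ← map_mul, Ideal.mem_quotient_iff_mem_sup, sup_comm] at hx
        rw [hN, Ideal.mem_quotient_iff_mem_sup, sup_comm]
        exact stage2 hi hj p hx
      · exact RingTheory.Sequence.IsWeaklyRegular.nil _ _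
  · -- nondegeneracy
    intro htop
    have hsmul : (Ideal.ofList [Ideal.Quotient.mk (J1 K i j) (X 0 + X 2),
        Ideal.Quotient.mk (J1 K i j) (X 1 + X 3)] • ⊤ :
          Submodule (MvPolynomial (Fin 4) K ⧸ J1 K i j)
            (MvPolynomial (Fin 4) K ⧸ J1 K i j)) =
        Ideal.map (Ideal.Quotient.mk (J1 K i j))
          (Ideal.span {(X 0 + X 2 : MvPolynomial (Fin 4) K), X 1 + X 3}) := by
      rw [Submodule.span_smul_eq, Submodule.set_smul_top_eq_span, Ideal.map_span,
        Set.image_insert_eq, Set.image_singleton]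
      congr 1
      ext x
      simp
    rw [hsmul] at htop
    have h1 : (Ideal.Quotient.mk (J1 K i j)) 1 ∈ Ideal.map (Ideal.Quotient.mk (J1 K i j))
        (Ideal.span {(X 0 + X 2 : MvPolynomial (Fin 4) K), X 1 + X 3}) := by
      rw [← htop]; exact Submodule.mem_top
    rw [Ideal.mem_quotient_iff_mem_sup, sup_comm] at h1
    exact one_not_mem hi hj h1
end

section
/- Assume b·c + a·d > 2·a·b. Then the set S = { s ≥ 1 : there exist nonnegative integers i, j with i + j ≤ s, 2a·i + a·j ≤ c·s, and b·j + 2b·(s − i − j) ≤ d·s } is nonempty, and, with r the least element of S, the defining ideal is J = (z_2^2 − z_1·z_4, z_3^r). In particular J is generated by 2 elements (a complete intersection). -/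
open MvPolynomial Pointwise

namespace Stmt17



def SS (a b c d : ℕ) : Set ℕ :=
  {s : ℕ | 1 ≤ s ∧ ∃ i j : ℕ, i + j ≤ s ∧ 2 * a * i + a * j ≤ c * s ∧
      b * j + 2 * b * (s - i - j) ≤ d * s}

lemma memSS {a b c d s P : ℕ} (hca : c < a) (hs : 1 ≤ s)
    (h1 : a * P ≤ c * s) (h2 : b * (2 * s - P) ≤ d * s) : s ∈ SS a b c d := by
  have hPs : P < s := by
    by_contra hPs
    push_neg at hPs
    have h3 : a * s ≤ a * P := Nat.mul_le_mul_left a hPs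
    have h4 : c * s < a * s := Nat.mul_lt_mul_of_lt_of_le hca le_rfl hs
    omega
  refine ⟨hs, P / 2, P % 2, by omega, ?_, ?_⟩
  · have h3 : 2 * a * (P / 2) + a * (P % 2) = a * P := by
      have h5 : 2 * (P / 2) + P % 2 = P := by omega
      calc 2 * a * (P / 2) + a * (P % 2) = a * (2 * (P / 2) + P % 2) := by ring
        _ = a * P := by rw [h5]
    omega
  · have h4 : P % 2 + 2 * (s - P / 2 - P % 2) = 2 * s - P := by omega
    calc b * (P % 2) + 2 * b * (s - P / 2 - P % 2)
        = b * (P % 2 + 2 * (s - P / 2 - P % 2)) := by ring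
      _ = b * (2 * s - P) := by rw [h4]
      _ ≤ d * s := h2

lemma SS_nonempty {a b c d : ℕ} (ha : 0 < a) (hb : 0 < b) (hca : c < a)
    (hkey : 2 * a * b < b * c + a * d) : (SS a b c d).Nonempty := by
  refine ⟨a * b, memSS (P := b * c) hca (Nat.mul_pos ha hb) (le_of_eq (by ring)) ?_⟩
  have h1 : b * c ≤ 2 * (a * b) := by nlinarith
  have h3 : 2 * a * b * b < (b * c + a * d) * b :=
    mul_lt_mul_of_pos_right hkey hb
  have h4 : b * (2 * (a * b) - b * c) = 2 * a * b * b - b * c * b := by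
    rw [Nat.mul_sub]; congr 1 <;> ring
  have h5 : (b * c + a * d) * b = b * c * b + a * d * b := by ring
  have h6 : d * (a * b) = a * d * b := by ring
  have h7 : b * (b * c) = b * c * b := by ring
  have h8 : b * (2 * (a * b)) = 2 * a * b * b := by ring
  omega

lemma cancel_lem {P Q l l' : ℕ} (hQP : Q < P)
    (he : P * l + Q * l' = P * l' + Q * l) : l = l' := by
  rcases le_total l l' with h | h
  · obtain ⟨e, rfl⟩ := Nat.exists_eq_add_of_le h
    have h1 : P * (l + e) = P * l + P * e := by ring
    have h2 : Q * (l + e) = Q * l + Q * e := by ring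
    have h3 : P * e = Q * e := by omega
    have h4 : e = 0 := by
      by_contra he0
      have : Q * e < P * e := mul_lt_mul_of_pos_right hQP (by omega)
      omega
    omega
  · obtain ⟨e, rfl⟩ := Nat.exists_eq_add_of_le h
    have h1 : P * (l' + e) = P * l' + P * e := by ring
    have h2 : Q * (l' + e) = Q * l' + Q * e := by ring
    have h3 : P * e = Q * e := by omega
    have h4 : e = 0 := by
      by_contra he0
      have : Q * e < P * e := mul_lt_mul_of_pos_right hQP (by omega)
      omega
    omega

lemma inj_arith {a b c d n i j l k i' j' l' k' : ℕ} (ha : 0 < a) (hb : 0 < b)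
    (hkey : 2 * a * b < b * c + a * d)
    (hs : i + j + l + k = n) (hs' : i' + j' + l' + k' = n) (hj : j ≤ 1) (hj' : j' ≤ 1)
    (hX : 2 * a * i + a * j + c * l = 2 * a * i' + a * j' + c * l')
    (hY : b * j + d * l + 2 * b * k = b * j' + d * l' + 2 * b * k') :
    i = i' ∧ j = j' ∧ l = l' ∧ k = k' := by
  have e1 : b * (2 * a * i + a * j + c * l) + a * (b * j + d * l + 2 * b * k)
      = 2 * a * b * (i + j + k) + (b * c + a * d) * l := by ring
  have e1' : b * (2 * a * i' + a * j' + c * l') + a * (b * j' + d * l' + 2 * b * k')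
      = 2 * a * b * (i' + j' + k') + (b * c + a * d) * l' := by ring
  have e2 : 2 * a * b * (i + j + k) + (b * c + a * d) * l
      = 2 * a * b * (i' + j' + k') + (b * c + a * d) * l' := by
    rw [← e1, ← e1', hX, hY]
  have t1 : 2 * a * b * (i + j + k) + 2 * a * b * l = 2 * a * b * n := by
    rw [← Nat.mul_add]; congr 1; omega
  have t1' : 2 * a * b * (i' + j' + k') + 2 * a * b * l' = 2 * a * b * n := by
    rw [← Nat.mul_add]; congr 1; omega
  have e5 : (b * c + a * d) * l + 2 * a * b * l' = (b * c + a * d) * l' + 2 * a * b * l := by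
    omega
  have hll : l = l' := cancel_lem hkey (by omega)
  subst hll
  have e6 : a * (2 * i + j) = 2 * a * i + a * j := by ring
  have e6' : a * (2 * i' + j') = 2 * a * i' + a * j' := by ring
  have e4 : a * (2 * i + j) = a * (2 * i' + j') := by omega
  have := Nat.eq_of_mul_eq_mul_left ha e4
  omega



lemma key_stepA {a b c d A B A' B' e δx δy : ℕ} (ha : 0 < a) (hb : 0 < b)
    (hkey : 2 * a * b < b * c + a * d) (hδ : 1 ≤ δx + δy)
    (h1 : a * A' + c * e + δx ≤ a * A) (h2 : b * B' + d * e + δy ≤ b * B)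
    (hsum : A' + B' + 2 * e = A + B) : False := by
  have f1 : b * (a * A' + c * e + δx) ≤ b * (a * A) := Nat.mul_le_mul_left b h1
  have f2 : a * (b * B' + d * e + δy) ≤ a * (b * B) := Nat.mul_le_mul_left a h2
  have f3 : a * b * (A' + B' + 2 * e) = a * b * (A + B) := by rw [hsum]
  have f4 : 2 * a * b * e ≤ (b * c + a * d) * e := Nat.mul_le_mul_right e hkey.le
  have f5 : δx ≤ b * δx := Nat.le_mul_of_pos_left δx hb
  have f6 : δy ≤ a * δy := Nat.le_mul_of_pos_left δy ha
  nlinarith [f1, f2, f3, f4, f5, f6]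

lemma key_core {a b c d A B A' B' m δx δy : ℕ} (ha : 0 < a) (hb : 0 < b)
    (hca : c < a) (hd2b : d < 2 * b) (hm : 1 ≤ m)
    (h1 : a * A' + δx ≤ a * A + c * m) (h2 : b * B' + δy ≤ b * B + d * m)
    (hsum : A + B + 2 * m = A' + B') :
    ∃ P, a * P ≤ c * m ∧ b * (2 * m - P) ≤ d * m := by
  have hcm : c * m < a * m := mul_lt_mul_of_pos_right hca (by omega)
  have hdm : d * m < 2 * b * m := mul_lt_mul_of_pos_right hd2b (by omega)
  -- Step C : A ≤ A'
  have hAA : A ≤ A' := by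
    by_contra hAA
    push_neg at hAA
    have hB' : B + 2 * m + 1 ≤ B' := by omega
    have f1 : b * (B + 2 * m + 1) ≤ b * B' := Nat.mul_le_mul_left b hB'
    nlinarith [f1, h2]
  -- Step B : B ≤ B'
  have hBB : B ≤ B' := by
    by_contra hBB
    push_neg at hBB
    have hA' : A + 2 * m + 1 ≤ A' := by omega
    have f1 : a * (A + 2 * m + 1) ≤ a * A' := Nat.mul_le_mul_left a hA'
    nlinarith [f1, h1]
  obtain ⟨P, rfl⟩ := Nat.exists_eq_add_of_le hAA
  refine ⟨P, ?_, ?_⟩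
  · have q1 : a * (A + P) = a * A + a * P := by ring
    omega
  · have hP2m : P ≤ 2 * m := by omega
    have hB'eq : B' = B + (2 * m - P) := by omega
    have q1 : b * (B + (2 * m - P)) = b * B + b * (2 * m - P) := by ring
    rw [hB'eq] at h2
    omega

lemma key_arith {a b c d n i j l k i' j' l' k' δx δy : ℕ}
    (ha : 0 < a) (hb : 0 < b) (hca : c < a) (hd2b : d < 2 * b)
    (hkey : 2 * a * b < b * c + a * d)
    (hs : i + j + l + k = n) (hs' : i' + j' + l' + k' = n)
    (hδ : 1 ≤ δx + δy)
    (hX : 2 * a * i' + a * j' + c * l' + δx ≤ 2 * a * i + a * j + c * l)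
    (hY : b * j' + d * l' + 2 * b * k' + δy ≤ b * j + d * l + 2 * b * k) :
    ∃ m P, 1 ≤ m ∧ m ≤ l ∧ a * P ≤ c * m ∧ b * (2 * m - P) ≤ d * m := by
  have rA : a * (2 * i + j) = 2 * a * i + a * j := by ring
  have rA' : a * (2 * i' + j') = 2 * a * i' + a * j' := by ring
  have rB : b * (j + 2 * k) = b * j + 2 * b * k := by ring
  have rB' : b * (j' + 2 * k') = b * j' + 2 * b * k' := by ring
  have hll : l' < l := by
    by_contra hll
    push_neg at hll
    obtain ⟨e, rfl⟩ := Nat.exists_eq_add_of_le hll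
    refine key_stepA (A := 2 * i + j) (B := j + 2 * k) (A' := 2 * i' + j') (B' := j' + 2 * k')
      (e := e) ha hb hkey hδ ?_ ?_ (by omega)
    · have q1 : c * (l + e) = c * l + c * e := by ring
      omega
    · have q1 : d * (l + e) = d * l + d * e := by ring
      omega
  obtain ⟨m, rfl⟩ := Nat.exists_eq_add_of_le hll.le
  have hm : 1 ≤ m := by omega
  have hx : a * (2 * i' + j') + δx ≤ a * (2 * i + j) + c * m := by
    have q1 : c * (l' + m) = c * l' + c * m := by ring
    omega
  have hy : b * (j' + 2 * k') + δy ≤ b * (j + 2 * k) + d * m := by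
    have q1 : d * (l' + m) = d * l' + d * m := by ring
    omega
  obtain ⟨P, hP1, hP2⟩ :=
    key_core (A := 2 * i + j) (B := j + 2 * k) (A' := 2 * i' + j') (B' := j' + 2 * k')
      (m := m) ha hb hca hd2b hm hx hy (by omega)
  exact ⟨m, P, hm, by omega, hP1, hP2⟩




/-- exponent vector in `Fin 2` of `u0^i u1^j u2^l u3^k`. -/
noncomputable def Phi (a b c d i j l k : ℕ) : Fin 2 →₀ ℕ :=
  Finsupp.single 0 (2 * a * i + a * j + c * l) + Finsupp.single 1 (b * j + d * l + 2 * b * k)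

lemma Phi_apply0 (a b c d i j l k : ℕ) : Phi a b c d i j l k 0 = 2 * a * i + a * j + c * l := by
  simp [Phi, Finsupp.single_apply]

lemma Phi_apply1 (a b c d i j l k : ℕ) : Phi a b c d i j l k 1 = b * j + d * l + 2 * b * k := by
  simp [Phi, Finsupp.single_apply]

lemma Phi_add (a b c d i j l k i' j' l' k' : ℕ) :
    Phi a b c d i j l k + Phi a b c d i' j' l' k'
      = Phi a b c d (i + i') (j + j') (l + l') (k + k') := by
  ext x
  fin_cases x <;> simp [Phi, Finsupp.single_apply] <;> ring

def E (a b c d n : ℕ) : Set (Fin 2 →₀ ℕ) :=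
  {w | ∃ i j l k : ℕ, i + j + l + k = n ∧ w = Phi a b c d i j l k}

lemma E_add (a b c d n : ℕ) : E a b c d n + E a b c d 1 = E a b c d (n + 1) := by
  ext w
  constructor
  · rintro ⟨w1, ⟨i, j, l, k, h1, rfl⟩, w2, ⟨i', j', l', k', h2, rfl⟩, rfl⟩
    exact ⟨i + i', j + j', l + l', k + k', by omega, by dsimp only; rw [Phi_add]⟩
  · rintro ⟨i, j, l, k, h, rfl⟩
    rcases i with _ | i
    · rcases j with _ | j
      · rcases l with _ | l
        · rcases k with _ | k
          · omega
          · refine ⟨Phi a b c d 0 0 0 k, ⟨0, 0, 0, k, by omega, rfl⟩,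
              Phi a b c d 0 0 0 1, ⟨0, 0, 0, 1, by omega, rfl⟩, ?_⟩
            dsimp only; rw [Phi_add]
        · refine ⟨Phi a b c d 0 0 l k, ⟨0, 0, l, k, by omega, rfl⟩,
            Phi a b c d 0 0 1 0, ⟨0, 0, 1, 0, by omega, rfl⟩, ?_⟩
          dsimp only; rw [Phi_add]
          congr 1 <;> omega
      · refine ⟨Phi a b c d 0 j l k, ⟨0, j, l, k, by omega, rfl⟩,
          Phi a b c d 0 1 0 0, ⟨0, 1, 0, 0, by omega, rfl⟩, ?_⟩
        dsimp only; rw [Phi_add]; congr 1 <;> omega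
    · refine ⟨Phi a b c d i j l k, ⟨i, j, l, k, by omega, rfl⟩,
        Phi a b c d 1 0 0 0, ⟨1, 0, 0, 0, by omega, rfl⟩, ?_⟩
      dsimp only; rw [Phi_add]; congr 1 <;> omega

variable {K : Type*} [Field K]

lemma span_image_mul (A B : Set (Fin 2 →₀ ℕ)) :
    Ideal.span ((fun s => monomial s (1 : K)) '' A) *
      Ideal.span ((fun s => monomial s (1 : K)) '' B)
      = Ideal.span ((fun s => monomial s (1 : K)) '' (A + B)) := by
  rw [Ideal.span_mul_span']
  congr 1
  ext z
  constructor
  · rintro ⟨p, ⟨a, ha, rfl⟩, q, ⟨b, hb, rfl⟩, rfl⟩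
    exact ⟨a + b, Set.add_mem_add ha hb, by simp [monomial_mul]⟩
  · rintro ⟨w, ⟨a, ha, b, hb, rfl⟩, rfl⟩
    exact ⟨_, ⟨a, ha, rfl⟩, _, ⟨b, hb, rfl⟩, by simp [monomial_mul]⟩

lemma monomial_two (A B : ℕ) (cc : K) :
    (monomial (Finsupp.single 0 A + Finsupp.single 1 B) cc : MvPolynomial (Fin 2) K)
      = C cc * X 0 ^ A * X 1 ^ B := by
  rw [X_pow_eq_monomial, X_pow_eq_monomial, C_apply, monomial_mul, monomial_mul]
  simp


variable {K : Type*} [Field K]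

example : (X 0 : MvPolynomial (Fin 2) K) = monomial (Finsupp.single 0 1) 1 := rfl

lemma monomial_fin4 (w : Fin 4 →₀ ℕ) (cc : K) :
    (monomial w cc : MvPolynomial (Fin 4) K)
      = C cc * X 0 ^ w 0 * X 1 ^ w 1 * X 2 ^ w 2 * X 3 ^ w 3 := by
  have hw : w = Finsupp.single 0 (w 0) + Finsupp.single 1 (w 1) + Finsupp.single 2 (w 2)
      + Finsupp.single 3 (w 3) := by
    ext x; fin_cases x <;> simp [Finsupp.single_apply]
  rw [C_apply, X_pow_eq_monomial, X_pow_eq_monomial, X_pow_eq_monomial, X_pow_eq_monomial,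
    monomial_mul, monomial_mul, monomial_mul, monomial_mul]
  simp only [zero_add, mul_one, one_mul]
  rw [← hw]

variable (a b c d : ℕ) (u : Fin 4 → MvPolynomial (Fin 2) K)
variable (hu0 : u 0 = X 0 ^ (2 * a)) (hu1 : u 1 = X 0 ^ a * X 1 ^ b)
variable (hu2 : u 2 = X 0 ^ c * X 1 ^ d) (hu3 : u 3 = X 1 ^ (2 * b))

include hu0 hu1 hu2 hu3 in
lemma aeval_monomial_u (w : Fin 4 →₀ ℕ) (cc : K) :
    aeval u (monomial w cc)
      = monomial (Phi a b c d (w 0) (w 1) (w 2) (w 3)) cc := by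
  rw [aeval_monomial, Finsupp.prod_pow, Fin.prod_univ_four, hu0, hu1, hu2, hu3,
    Phi, monomial_two, algebraMap_eq]
  ring

include hu0 hu1 hu2 hu3 in
lemma gens_image :
    ({u 0, u 1, u 2, u 3} : Set (MvPolynomial (Fin 2) K))
      = (fun s => monomial s (1 : K)) '' E a b c d 1 := by
  have e0 : Phi a b c d 1 0 0 0 = Finsupp.single 0 (2 * a) := by
    ext x; fin_cases x <;> simp [Phi, Finsupp.single_apply]
  have h0 : u 0 = monomial (Phi a b c d 1 0 0 0) (1 : K) := by
    rw [hu0, X_pow_eq_monomial, e0]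
  have h1 : u 1 = monomial (Phi a b c d 0 1 0 0) (1 : K) := by
    rw [hu1, Phi]; simp only [mul_one, mul_zero, add_zero, zero_add]
    rw [monomial_two]; simp
  have h2 : u 2 = monomial (Phi a b c d 0 0 1 0) (1 : K) := by
    rw [hu2, Phi]; simp only [mul_one, mul_zero, add_zero, zero_add]
    rw [monomial_two]; simp
  have e3 : Phi a b c d 0 0 0 1 = Finsupp.single 1 (2 * b) := by
    ext x; fin_cases x <;> simp [Phi, Finsupp.single_apply]
  have h3 : u 3 = monomial (Phi a b c d 0 0 0 1) (1 : K) := by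
    rw [hu3, X_pow_eq_monomial, e3]
  ext z
  constructor
  · rintro (rfl | rfl | rfl | rfl)
    · exact ⟨Phi a b c d 1 0 0 0, ⟨1, 0, 0, 0, by omega, rfl⟩, h0.symm⟩
    · exact ⟨Phi a b c d 0 1 0 0, ⟨0, 1, 0, 0, by omega, rfl⟩, h1.symm⟩
    · exact ⟨Phi a b c d 0 0 1 0, ⟨0, 0, 1, 0, by omega, rfl⟩, h2.symm⟩
    · exact ⟨Phi a b c d 0 0 0 1, ⟨0, 0, 0, 1, by omega, rfl⟩, h3.symm⟩
  · rintro ⟨w, ⟨i, j, l, k, hsum, rfl⟩, rfl⟩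
    have : (i = 1 ∧ j = 0 ∧ l = 0 ∧ k = 0) ∨ (i = 0 ∧ j = 1 ∧ l = 0 ∧ k = 0)
        ∨ (i = 0 ∧ j = 0 ∧ l = 1 ∧ k = 0) ∨ (i = 0 ∧ j = 0 ∧ l = 0 ∧ k = 1) := by omega
    rcases this with ⟨rfl, rfl, rfl, rfl⟩ | ⟨rfl, rfl, rfl, rfl⟩ | ⟨rfl, rfl, rfl, rfl⟩
      | ⟨rfl, rfl, rfl, rfl⟩
    · exact Or.inl h0.symm
    · exact Or.inr (Or.inl h1.symm)
    · exact Or.inr (Or.inr (Or.inl h2.symm))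
    · exact Or.inr (Or.inr (Or.inr h3.symm))

include hu0 hu1 hu2 hu3 in
lemma span_pow (n : ℕ) :
    Ideal.span ({u 0, u 1, u 2, u 3} : Set (MvPolynomial (Fin 2) K)) ^ n
      = Ideal.span ((fun s => monomial s (1 : K)) '' E a b c d n) := by
  induction n with
  | zero =>
    rw [pow_zero, Ideal.one_eq_top]
    symm
    rw [Ideal.eq_top_iff_one]
    refine Ideal.subset_span ⟨0, ⟨0, 0, 0, 0, by omega, ?_⟩, by simp⟩
    ext x; fin_cases x <;> simp [Phi, Finsupp.single_apply]
  | succ n ih =>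
    rw [pow_succ, ih, gens_image a b c d u hu0 hu1 hu2 hu3, span_image_mul, E_add]


/-- normal form exponent: reduce z1^2 ↦ z0 z3 -/
noncomputable def Nv (v : Fin 4 →₀ ℕ) : Fin 4 →₀ ℕ :=
  Finsupp.single 0 (v 0 + v 1 / 2) + Finsupp.single 1 (v 1 % 2) +
    Finsupp.single 2 (v 2) + Finsupp.single 3 (v 3 + v 1 / 2)

lemma Nv_apply0 (v : Fin 4 →₀ ℕ) : Nv v 0 = v 0 + v 1 / 2 := by
  simp [Nv, Finsupp.single_apply]
lemma Nv_apply1 (v : Fin 4 →₀ ℕ) : Nv v 1 = v 1 % 2 := by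
  simp [Nv, Finsupp.single_apply]
lemma Nv_apply2 (v : Fin 4 →₀ ℕ) : Nv v 2 = v 2 := by
  simp [Nv, Finsupp.single_apply]
lemma Nv_apply3 (v : Fin 4 →₀ ℕ) : Nv v 3 = v 3 + v 1 / 2 := by
  simp [Nv, Finsupp.single_apply]

lemma diff_mem (v : Fin 4 →₀ ℕ) (cc : K) :
    (monomial v cc : MvPolynomial (Fin 4) K) - monomial (Nv v) cc ∈
      Ideal.span {(X 1 : MvPolynomial (Fin 4) K) ^ 2 - X 0 * X 3} := by
  obtain ⟨t, ht⟩ := sub_dvd_pow_sub_pow ((X 1 : MvPolynomial (Fin 4) K) ^ 2) (X 0 * X 3) (v 1 / 2)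
  rw [Ideal.mem_span_singleton]
  refine ⟨t * (C cc * X 0 ^ (v 0) * X 1 ^ (v 1 % 2) * X 2 ^ (v 2) * X 3 ^ (v 3)), ?_⟩
  rw [monomial_fin4, monomial_fin4, Nv_apply0, Nv_apply1, Nv_apply2, Nv_apply3]
  set q := v 1 / 2 with hq
  set e := v 1 % 2 with he
  have hv : v 1 = 2 * q + e := by omega
  rw [hv]
  linear_combination (C cc * X 0 ^ v 0 * X 1 ^ e * X 2 ^ v 2 * X 3 ^ v 3) * ht

def S01 : Set (Fin 2 →₀ ℕ) := {Finsupp.single 0 1, Finsupp.single 1 1}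

include hu0 hu1 hu2 hu3 in
lemma mm_I_pow (mm I : Ideal (MvPolynomial (Fin 2) K))
    (hI : I = Ideal.span {u 0, u 1, u 2, u 3})
    (hmm : mm = Ideal.span {(X 0 : MvPolynomial (Fin 2) K), X 1}) (n : ℕ) :
    mm * I ^ n = Ideal.span ((fun s => monomial s (1 : K)) '' (S01 + E a b c d n)) := by
  have h1 : ({(X 0 : MvPolynomial (Fin 2) K), X 1} : Set _)
      = (fun s => monomial s (1 : K)) '' S01 := by
    rw [S01, Set.image_pair]
    rfl
  rw [hmm, hI, span_pow a b c d u hu0 hu1 hu2 hu3, h1, span_image_mul]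

include hu0 hu1 hu2 hu3 in
lemma homog_mem (ha : 0 < a) (hb : 0 < b) (hca : c < a) (hd2b : d < 2 * b)
    (hkey : 2 * a * b < b * c + a * d)
    (mm I : Ideal (MvPolynomial (Fin 2) K))
    (hI : I = Ideal.span {u 0, u 1, u 2, u 3})
    (hmm : mm = Ideal.span {(X 0 : MvPolynomial (Fin 2) K), X 1})
    (r : ℕ) (hrmin : ∀ m ∈ SS a b c d, r ≤ m)
    (p : MvPolynomial (Fin 4) K) (n : ℕ)
    (hpdeg : ∀ v ∈ p.support, v 0 + v 1 + v 2 + v 3 = n)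
    (haev : aeval u p ∈ mm * I ^ n) :
    p ∈ Ideal.span {(X 1 : MvPolynomial (Fin 4) K) ^ 2 - X 0 * X 3, X 2 ^ r} := by
  classical
  set g1 : MvPolynomial (Fin 4) K := X 1 ^ 2 - X 0 * X 3 with hg1
  set q : MvPolynomial (Fin 4) K := ∑ v ∈ p.support, monomial (Nv v) (coeff v p) with hqdef
  have hdiff : p - q ∈ Ideal.span {g1} := by
    have hp : (∑ v ∈ p.support, monomial v (coeff v p)) = p := support_sum_monomial_coeff p
    rw [← hp, hqdef, ← Finset.sum_sub_distrib]
    exact Submodule.sum_mem _ fun v _ => diff_mem v (coeff v p)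
  have hqsupp : ∀ w ∈ q.support, ∃ v ∈ p.support, w = Nv v := by
    intro w hw
    rw [hqdef] at hw
    obtain ⟨v, hv, hw2⟩ := Finset.mem_biUnion.mp (support_sum hw)
    refine ⟨v, hv, ?_⟩
    rw [support_monomial] at hw2
    by_cases hz : coeff v p = 0
    · simp [hz] at hw2
    · simp only [if_neg hz, Finset.mem_singleton] at hw2
      exact hw2
  have hq2 : ∀ w ∈ q.support, w 0 + w 1 + w 2 + w 3 = n ∧ w 1 ≤ 1 := by
    intro w hw
    obtain ⟨v, hv, rfl⟩ := hqsupp w hw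
    have := hpdeg v hv
    rw [Nv_apply0, Nv_apply1, Nv_apply2, Nv_apply3]
    omega
  have haeg1 : aeval u g1 = 0 := by
    rw [hg1]
    simp only [map_sub, map_mul, map_pow, aeval_X, hu0, hu1, hu3]
    ring
  have haevq : aeval u q ∈ mm * I ^ n := by
    obtain ⟨t, ht⟩ := Ideal.mem_span_singleton.mp hdiff
    have h0 : aeval u p - aeval u q = 0 := by
      rw [← map_sub, ht, map_mul, haeg1, zero_mul]
    have h1 : aeval u q = aeval u p := (sub_eq_zero.mp h0).symm
    rwa [h1]
  have hformula : aeval u q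
      = ∑ w ∈ q.support, monomial (Phi a b c d (w 0) (w 1) (w 2) (w 3)) (coeff w q) := by
    conv_lhs => rw [← support_sum_monomial_coeff q]
    rw [map_sum]
    exact Finset.sum_congr rfl fun w _ => aeval_monomial_u a b c d u hu0 hu1 hu2 hu3 w (coeff w q)
  have hmain : ∀ w ∈ q.support, r ≤ w 2 := by
    intro w0 hw0
    obtain ⟨hdw0, hjw0⟩ := hq2 w0 hw0
    have hco : coeff (Phi a b c d (w0 0) (w0 1) (w0 2) (w0 3)) (aeval u q) = coeff w0 q := by
      rw [hformula, coeff_sum]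
      rw [Finset.sum_eq_single w0]
      · rw [coeff_monomial, if_pos rfl]
      · intro w hw hne
        rw [coeff_monomial, if_neg]
        intro heq
        obtain ⟨hdw, hjw⟩ := hq2 w hw
        have h0' := DFunLike.congr_fun heq 0
        have h1' := DFunLike.congr_fun heq 1
        rw [Phi_apply0, Phi_apply0] at h0'
        rw [Phi_apply1, Phi_apply1] at h1'
        obtain ⟨e1, e2, e3, e4⟩ := inj_arith ha hb hkey hdw hdw0 hjw hjw0 h0' h1'
        apply hne
        ext x
        fin_cases x
        · exact e1
        · exact e2
        · exact e3
        · exact e4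
      · intro h; exact absurd hw0 h
    have hsupp : Phi a b c d (w0 0) (w0 1) (w0 2) (w0 3) ∈ (aeval u q).support :=
      mem_support_iff.mpr (by rw [hco]; exact mem_support_iff.mp hw0)
    rw [mm_I_pow a b c d u hu0 hu1 hu2 hu3 mm I hI hmm n] at haevq
    obtain ⟨w, hwmem, hwle⟩ := mem_ideal_span_monomial_image.mp haevq _ hsupp
    obtain ⟨s, hs, t2, ⟨i', j', l', k', hsum', rfl⟩, rfl⟩ := hwmem
    have hle0 := Finsupp.le_def.mp hwle 0
    have hle1 := Finsupp.le_def.mp hwle 1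
    rw [Finsupp.add_apply, Phi_apply0, Phi_apply0] at hle0
    rw [Finsupp.add_apply, Phi_apply1, Phi_apply1] at hle1
    rcases hs with rfl | hs
    · rw [Finsupp.single_apply, if_pos rfl] at hle0
      rw [Finsupp.single_apply, if_neg (by decide)] at hle1
      obtain ⟨m, P, hm1, hml, hP1, hP2⟩ := key_arith (δx := 1) (δy := 0)
        ha hb hca hd2b hkey hdw0 hsum' (by omega) (by omega) (by omega)
      have hmSS : m ∈ SS a b c d := memSS hca hm1 hP1 hP2
      exact le_trans (hrmin m hmSS) hml
    · rw [Set.mem_singleton_iff] at hs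
      subst hs
      rw [Finsupp.single_apply, if_neg (by decide)] at hle0
      rw [Finsupp.single_apply, if_pos rfl] at hle1
      obtain ⟨m, P, hm1, hml, hP1, hP2⟩ := key_arith (δx := 0) (δy := 1)
        ha hb hca hd2b hkey hdw0 hsum' (by omega) (by omega) (by omega)
      have hmSS : m ∈ SS a b c d := memSS hca hm1 hP1 hP2
      exact le_trans (hrmin m hmSS) hml
  have hqmem : q ∈ Ideal.span {(X 2 : MvPolynomial (Fin 4) K) ^ r} := by
    have himg : ((fun s => monomial s (1 : K)) '' {Finsupp.single 2 r}
        : Set (MvPolynomial (Fin 4) K)) = {X 2 ^ r} := by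
      rw [Set.image_singleton, X_pow_eq_monomial]
    rw [← himg]
    refine mem_ideal_span_monomial_image.mpr ?_
    intro xi hxi
    exact ⟨Finsupp.single 2 r, rfl, Finsupp.single_le_iff.mpr (hmain xi hxi)⟩
  have hsub1 : Ideal.span {g1} ≤ Ideal.span {g1, (X 2 : MvPolynomial (Fin 4) K) ^ r} :=
    Ideal.span_mono (by simp)
  have hsub2 : Ideal.span {(X 2 : MvPolynomial (Fin 4) K) ^ r}
      ≤ Ideal.span {g1, (X 2 : MvPolynomial (Fin 4) K) ^ r} :=
    Ideal.span_mono (by simp)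
  have hpq : p = (p - q) + q := by ring
  rw [hpq]
  exact Ideal.add_mem _ (hsub1 hdiff) (hsub2 hqmem)


lemma deg4 (v : Fin 4 →₀ ℕ) : Finsupp.degree v = v 0 + v 1 + v 2 + v 3 := by
  rw [Finsupp.degree]
  show (∑ i ∈ v.support, v i) = _
  rw [Finset.sum_subset (Finset.subset_univ _)
    (fun i _ hi => Finsupp.notMem_support_iff.mp hi), Fin.sum_univ_four]

end Stmt17

open MvPolynomial

theorem stmt_17 {K : Type*} [Field K] (a b c d : ℕ)
    (ha : 0 < a) (hb : 0 < b) (hc : 0 < c) (hd : 0 < d)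
    (hac : Nat.gcd a c = 1) (hbd : Nat.gcd b d = 1)
    (hba : a ≤ b) (hca : c < a) (hbd1 : b < d) (hd2b : d < 2 * b)
    (u : Fin 4 → MvPolynomial (Fin 2) K)
    (hu0 : u 0 = X 0 ^ (2 * a)) (hu1 : u 1 = X 0 ^ a * X 1 ^ b)
    (hu2 : u 2 = X 0 ^ c * X 1 ^ d) (hu3 : u 3 = X 1 ^ (2 * b))
    (I mm : Ideal (MvPolynomial (Fin 2) K))
    (hI : I = Ideal.span {u 0, u 1, u 2, u 3})
    (hmm : mm = Ideal.span {(X 0 : MvPolynomial (Fin 2) K), X 1})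
    (J : Ideal (MvPolynomial (Fin 4) K))
    (hJ : ∀ f : MvPolynomial (Fin 4) K,
      f ∈ J ↔ ∀ e : ℕ, aeval u (homogeneousComponent e f) ∈ mm * I ^ e)
    (hkey : 2 * a * b < b * c + a * d) :
    {s : ℕ | 1 ≤ s ∧ ∃ i j : ℕ, i + j ≤ s ∧ 2 * a * i + a * j ≤ c * s ∧
        b * j + 2 * b * (s - i - j) ≤ d * s}.Nonempty ∧
    J = Ideal.span {(X 1 : MvPolynomial (Fin 4) K) ^ 2 - X 0 * X 3,
      X 2 ^ sInf {s : ℕ | 1 ≤ s ∧ ∃ i j : ℕ, i + j ≤ s ∧ 2 * a * i + a * j ≤ c * s ∧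
        b * j + 2 * b * (s - i - j) ≤ d * s}} := by
  classical
  have hne : (Stmt17.SS a b c d).Nonempty := Stmt17.SS_nonempty ha hb hca hkey
  refine ⟨hne, ?_⟩
  set r : ℕ := sInf {s : ℕ | 1 ≤ s ∧ ∃ i j : ℕ, i + j ≤ s ∧ 2 * a * i + a * j ≤ c * s ∧
      b * j + 2 * b * (s - i - j) ≤ d * s} with hrdef
  have hrmem : r ∈ Stmt17.SS a b c d := Nat.sInf_mem hne
  have hrmin : ∀ m ∈ Stmt17.SS a b c d, r ≤ m := fun m hm => Nat.sInf_le hm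
  have hr1 : 1 ≤ r := hrmem.1
  apply le_antisymm
  · -- J ≤ span
    intro f hf
    have hf' := (hJ f).mp hf
    rw [← sum_homogeneousComponent f]
    apply Submodule.sum_mem
    intro e _
    refine Stmt17.homog_mem a b c d u hu0 hu1 hu2 hu3 ha hb hca hd2b hkey mm I hI hmm r
      hrmin _ e ?_ (hf' e)
    intro v hv
    have hne0 : coeff v (homogeneousComponent e f) ≠ 0 := mem_support_iff.mp hv
    rw [coeff_homogeneousComponent] at hne0
    by_cases hde : Finsupp.degree v = e
    · rw [← hde, Stmt17.deg4]
    · rw [if_neg hde] at hne0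
      exact absurd rfl hne0
  · -- span ≤ J
    rw [Ideal.span_le]
    intro g hg
    rcases hg with rfl | hg
    · -- g1 ∈ J
      rw [SetLike.mem_coe, hJ]
      intro e
      have hhom : ((X 1 : MvPolynomial (Fin 4) K) ^ 2 - X 0 * X 3).IsHomogeneous 2 := by
        have h1 : ((X 1 : MvPolynomial (Fin 4) K) ^ 2).IsHomogeneous 2 := by
          simpa using (isHomogeneous_X K 1).pow 2
        have h2 : ((X 0 : MvPolynomial (Fin 4) K) * X 3).IsHomogeneous 2 :=
          (isHomogeneous_X K 0).mul (isHomogeneous_X K 3)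
        exact h1.sub h2
      rw [homogeneousComponent_of_mem ((mem_homogeneousSubmodule _ _).mpr hhom)]
      split_ifs with h
      · have h0 : aeval u ((X 1 : MvPolynomial (Fin 4) K) ^ 2 - X 0 * X 3) = 0 := by
          simp only [map_sub, map_mul, map_pow, aeval_X, hu0, hu1, hu3]
          ring
        rw [h0]
        exact Submodule.zero_mem _
      · simp only [map_zero]
        exact Submodule.zero_mem _
    · -- g2 ∈ J
      rw [Set.mem_singleton_iff] at hg
      subst hg
      rw [SetLike.mem_coe, hJ]
      intro e
      have hhom : ((X 2 : MvPolynomial (Fin 4) K) ^ r).IsHomogeneous r := by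
        simpa using (isHomogeneous_X K 2).pow r
      rw [homogeneousComponent_of_mem ((mem_homogeneousSubmodule _ _).mpr hhom)]
      split_ifs with h
      · rw [h]
        obtain ⟨-, i, j, hij, hXr, hYr⟩ := hrmem
        set k : ℕ := r - i - j with hk
        have hstrict : 2 * a * i + a * j < c * r ∨ b * j + 2 * b * k < d * r := by
          by_contra hcon
          push_neg at hcon
          have e1 : 2 * a * i + a * j = c * r := by omega
          have e2 : b * j + 2 * b * k = d * r := by omega
          have f1 : b * (2 * a * i + a * j) = b * (c * r) := by rw [e1]
          have f2 : a * (b * j + 2 * b * k) = a * (d * r) := by rw [e2]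
          have q1 : b * (2 * a * i + a * j) + a * (b * j + 2 * b * k)
              = 2 * a * b * (i + j + k) := by ring
          have q2 : 2 * a * b * (i + j + k) = 2 * a * b * r := by
            rw [show i + j + k = r by omega]
          have q3 : b * (c * r) + a * (d * r) = (b * c + a * d) * r := by ring
          have q4 : 2 * a * b * r < (b * c + a * d) * r :=
            mul_lt_mul_of_pos_right hkey (by omega)
          omega
        have haev2 : aeval u ((X 2 : MvPolynomial (Fin 4) K) ^ r)
            = monomial (Finsupp.single 0 (c * r) + Finsupp.single 1 (d * r)) (1 : K) := by
          rw [map_pow, aeval_X, hu2, Stmt17.monomial_two]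
          rw [mul_pow, ← pow_mul, ← pow_mul]
          simp [mul_comm]
        rw [haev2, Stmt17.mm_I_pow a b c d u hu0 hu1 hu2 hu3 mm I hI hmm r]
        refine mem_ideal_span_monomial_image.mpr ?_
        intro xi hxi
        rw [support_monomial, if_neg one_ne_zero, Finset.mem_singleton] at hxi
        subst hxi
        rcases hstrict with hst | hst
        · refine ⟨Finsupp.single 0 1 + Stmt17.Phi a b c d i j 0 k,
            Set.add_mem_add (by left; rfl) ⟨i, j, 0, k, by omega, rfl⟩, ?_⟩
          rw [Finsupp.le_def]
          intro x
          fin_cases x <;>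
            simp [Stmt17.Phi, Finsupp.single_apply] <;> omega
        · refine ⟨Finsupp.single 1 1 + Stmt17.Phi a b c d i j 0 k,
            Set.add_mem_add (by right; rfl) ⟨i, j, 0, k, by omega, rfl⟩, ?_⟩
          rw [Finsupp.le_def]
          intro x
          fin_cases x <;>
            simp [Stmt17.Phi, Finsupp.single_apply] <;> omega
      · simp only [map_zero]
        exact Submodule.zero_mem _
end

section
/- Assume b·c + a·d < 2·a·b. Then the set S = { s ≥ 1 : there exists a positive integer ℓ with c·s ≤ a·ℓ and b·ℓ ≤ (2b − d)·s } is nonempty, and, with r the least element of S, there exists a positive integer ℓ with c·r ≤ a·ℓ and b·ℓ ≤ (2b − d)·r such that, setting i = ℓ/2 and j = 0 if ℓ is even, and i = (ℓ−1)/2 and j = 1 if ℓ is odd, one has i + j ≤ r and J = (z_2^2 − z_1·z_4, z_1^i·z_2^j·z_4^{r−i−j}). In particular J is generated by 2 elements (a complete intersection). -/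
/-!
Write `W γ` for the exponent vector of `u^γ = u₁^γ₀ u₂^γ₁ u₃^γ₂ u₄^γ₃`: it is
`(a X + c γ₂, b Y + d γ₂)` with `X = 2γ₀ + γ₁` and `Y = γ₁ + 2γ₃`, the exponents of `s` and `t`
under `z₁, z₂, z₄ ↦ s², st, t²`. All ideals involved are monomial, so a form of degree `e` is
mapped into `m I^e` exactly when every monomial `γ` in it has `W γ > W γ'` for some `γ'` of
degree `e`.

Modulo `z₂² - z₁z₄` every monomial is congruent to one with `γ₁ ≤ 1`, and on those of a fixed
degree `W` is injective because `bc + ad < 2ab`. The same inequality shows that `W γ' < W γ`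
forces `γ'₂ > γ₂`, so `(γ'₂ - γ₂, X - X')` is an admissible pair of `S`; minimality of `r` then
gives `ℓ ≤ X` and `2r - ℓ ≤ Y`, i.e. `s^X t^Y` is divisible by `s^ℓ t^(2r-ℓ)`, the image of
`z₁^i z₂^j z₄^(r-i-j)`.
-/

open MvPolynomial Finsupp

namespace MvPolynomial

variable {σ τ R : Type*} [CommSemiring R] (w : σ → τ →₀ ℕ)

theorem aeval_monomial_of_monomial (γ : σ →₀ ℕ) (c : R) :
    aeval (fun k => monomial (w k) (1 : R)) (monomial γ c) =
      monomial (linearCombination ℕ w γ) c := by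
  rw [aeval_monomial, linearCombination_apply, monomial_finsupp_sum_index]
  simp [monomial_pow, algebraMap_eq]

theorem monomial_linearCombination_mem_pow (γ : σ →₀ ℕ) :
    monomial (linearCombination ℕ w γ) (1 : R) ∈
      Ideal.span (Set.range fun k => monomial (w k) (1 : R)) ^ γ.degree := by
  rw [← aeval_monomial_of_monomial, aeval_monomial, map_one, one_mul, Finsupp.prod,
    degree_apply, ← Finset.prod_pow_eq_pow_sum]
  exact Ideal.prod_mem_prod fun k _ =>
    Ideal.pow_mem_pow (Ideal.subset_span (Set.mem_range_self k)) _

theorem pow_span_monomial_le (e : ℕ) :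
    Ideal.span (Set.range fun k => monomial (w k) (1 : R)) ^ e ≤
      Ideal.span ((fun η => monomial η (1 : R)) ''
        (linearCombination ℕ w '' {γ | γ.degree = e})) := by
  induction e with
  | zero =>
    rw [pow_zero, Ideal.one_eq_top, top_le_iff, Ideal.eq_top_iff_one]
    exact Ideal.subset_span ⟨0, ⟨0, map_zero _, map_zero _⟩, (one_def).symm⟩
  | succ e ih =>
    calc _ ≤ _ * _ := Ideal.mul_mono_left ih
      _ = _ := Ideal.span_mul_span' _ _
      _ ≤ _ := Ideal.span_mono ?_
    rintro _ ⟨_, ⟨_, ⟨γ, hγ, rfl⟩, rfl⟩, _, ⟨k, rfl⟩, rfl⟩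
    refine ⟨_, ⟨γ + single k 1, ?_, rfl⟩, ?_⟩
    · simpa using hγ
    · simp [monomial_mul]

theorem exists_lt_of_mem_span_X_mul_pow {f : MvPolynomial τ R} {e : ℕ}
    (hf : f ∈ Ideal.span (Set.range X) *
      Ideal.span (Set.range fun k => monomial (w k) (1 : R)) ^ e) :
    ∀ η ∈ f.support, ∃ γ : σ →₀ ℕ, γ.degree = e ∧ linearCombination ℕ w γ < η := by
  have hle : Ideal.span (Set.range X) * Ideal.span (Set.range fun k => monomial (w k) (1 : R)) ^ e
      ≤ Ideal.span ((fun η => monomial η (1 : R)) ''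
        {η | ∃ γ : σ →₀ ℕ, γ.degree = e ∧ linearCombination ℕ w γ < η}) := by
    calc _ ≤ _ * _ := Ideal.mul_mono_right (pow_span_monomial_le w e)
      _ = _ := Ideal.span_mul_span' _ _
      _ ≤ _ := Ideal.span_mono ?_
    rintro _ ⟨_, ⟨k, rfl⟩, _, ⟨_, ⟨γ, hγ, rfl⟩, rfl⟩, rfl⟩
    have hpos : (0 : τ →₀ ℕ) < single k 1 := pos_iff_ne_zero.mpr (single_ne_zero.mpr one_ne_zero)
    exact ⟨single k 1 + linearCombination ℕ w γ, ⟨γ, hγ, lt_add_of_pos_left _ hpos⟩,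
      by simp [X, monomial_mul]⟩
  intro η hη
  obtain ⟨η', ⟨γ, hγ, hlt⟩, hη'⟩ := mem_ideal_span_monomial_image.mp (hle hf) η hη
  exact ⟨γ, hγ, hlt.trans_le hη'⟩

theorem monomial_mem_span_X_mul_pow {γ : σ →₀ ℕ} {η : τ →₀ ℕ}
    (hlt : linearCombination ℕ w γ < η) (c : R) :
    monomial η c ∈ Ideal.span (Set.range X) *
      Ideal.span (Set.range fun k => monomial (w k) (1 : R)) ^ γ.degree := by
  classical
  obtain ⟨hle, k, hk⟩ := Finsupp.lt_def.mp hlt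
  have hdvd : single k 1 + linearCombination ℕ w γ ≤ η := fun i => by
    rcases eq_or_ne i k with rfl | hi
    · rw [Finsupp.add_apply, single_eq_same]
      omega
    · simpa [single_eq_of_ne hi] using hle i
  have heq : monomial η c = monomial (η - (single k 1 + linearCombination ℕ w γ)) c *
      (X k * monomial (linearCombination ℕ w γ) 1) := by
    rw [X, monomial_mul, monomial_mul, one_mul, mul_one, tsub_add_cancel_of_le hdvd]
  rw [heq]
  exact Ideal.mul_mem_left _ _ (Ideal.mul_mem_mul (Ideal.subset_span (Set.mem_range_self k))
    (monomial_linearCombination_mem_pow w γ))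

theorem coeff_aeval_of_injOn {p : MvPolynomial σ R}
    (hinj : Set.InjOn (linearCombination ℕ w) p.support) {γ : σ →₀ ℕ} (hγ : γ ∈ p.support) :
    coeff (linearCombination ℕ w γ) (aeval (fun k => monomial (w k) (1 : R)) p) = coeff γ p := by
  classical
  conv_lhs => rw [← support_sum_monomial_coeff p]
  simp only [map_sum, aeval_monomial_of_monomial, coeff_sum, coeff_monomial]
  rw [Finset.sum_eq_single_of_mem γ hγ (fun γ' hγ' hne => if_neg fun h => hne (hinj hγ' hγ h)),
    if_pos rfl]

theorem mem_iff_aeval_mem_of_isHomogeneous {S : Type*} [CommSemiring S] [Algebra R S]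
    {u : σ → S} {A : ℕ → Ideal S} {J : Ideal (MvPolynomial σ R)}
    (hJ : ∀ f, f ∈ J ↔ ∀ e, aeval u (homogeneousComponent e f) ∈ A e)
    {g : MvPolynomial σ R} {n : ℕ} (hg : g.IsHomogeneous n) : g ∈ J ↔ aeval u g ∈ A n := by
  rw [hJ]
  refine ⟨fun h => by simpa [homogeneousComponent_of_mem hg] using h n, fun h e => ?_⟩
  rw [homogeneousComponent_of_mem hg]
  split_ifs with hne
  · exact hne ▸ h
  · simp

theorem IsHomogeneous.degree_of_mem_support {φ : MvPolynomial σ R} {n : ℕ}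
    (hφ : φ.IsHomogeneous n) {d : σ →₀ ℕ} (hd : d ∈ φ.support) : d.degree = n :=
  by_contra fun hne => mem_support_iff.mp hd (hφ.coeff_eq_zero hne)

end MvPolynomial

def Admissible (a b c d s l : ℕ) : Prop :=
  0 < s ∧ 0 < l ∧ c * s ≤ a * l ∧ b * l + d * s ≤ 2 * b * s

section Admissible

variable {a b c d : ℕ}

theorem le_sub_mul_iff {l s : ℕ} (hd : d ≤ 2 * b) :
    b * l ≤ (2 * b - d) * s ↔ b * l + d * s ≤ 2 * b * s := by
  rw [Nat.sub_mul, Nat.le_sub_iff_add_le (Nat.mul_le_mul_right s hd)]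

theorem setOf_admissible_eq (hd : d ≤ 2 * b) :
    {s : ℕ | 1 ≤ s ∧ ∃ l : ℕ, 0 < l ∧ c * s ≤ a * l ∧ b * l ≤ (2 * b - d) * s} =
      {s | ∃ l, Admissible a b c d s l} := by
  ext s
  simp only [Set.mem_ofPred_eq, Admissible, le_sub_mul_iff hd]
  exact ⟨fun ⟨hs, l, hl⟩ => ⟨l, hs, hl⟩, fun ⟨l, hs, hl⟩ => ⟨hs, l, hl⟩⟩

theorem admissible_mul (ha : 0 < a) (hb : 0 < b) (hkey : b * c + a * d < 2 * a * b) :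
    Admissible a b c d (a * b) (b * c + 1) := by
  refine ⟨Nat.mul_pos ha hb, Nat.succ_pos _, by nlinarith, ?_⟩
  nlinarith

theorem Admissible.lt {s l : ℕ} (hbd : b < d) (h : Admissible a b c d s l) : l < s := by
  obtain ⟨hs, -, -, h⟩ := h
  by_contra! hle
  nlinarith

-- The slack would make `(r - 1, m)` admissible.
theorem false_of_minimal_of_slack {r m : ℕ} (hmin : ∀ s l, Admissible a b c d s l → r ≤ s)
    (hbd : b < d) (hr : 0 < r) (hm : 0 < m) (hcm : c * r ≤ a * m)
    (hbm : b * (m + 1) + d * r ≤ 2 * b * r) : False := by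
  obtain ⟨r, rfl⟩ := Nat.exists_eq_add_of_lt hr
  have hmr : m < r := by nlinarith
  have := hmin r m ⟨by omega, hm, by nlinarith, by nlinarith⟩
  omega

theorem Admissible.bounds {r l s m : ℕ} (hmin : ∀ s l, Admissible a b c d s l → r ≤ s)
    (hbd : b < d) (hr : Admissible a b c d r l)
    (h : Admissible a b c d s m) : l ≤ m ∧ m + 2 * r ≤ 2 * s + l := by
  have hrs := hmin s m h
  obtain ⟨hr0, hl0, hcl, hbl⟩ := hr
  obtain ⟨-, hm0, hcm, hbm⟩ := h
  constructor
  · by_contra! hml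
    exact false_of_minimal_of_slack hmin hbd hr0 hm0 (by nlinarith) (by nlinarith)
  · by_contra! hlt
    exact false_of_minimal_of_slack hmin hbd hr0 hl0 hcl (by nlinarith)

-- Pairing `(a X + c s, b Y + d s)` with `(b, a)` gives `ab (X + Y + 2s) - (2ab - bc - ad) s`.
theorem le_and_eq_of_weight_le (ha : 0 < a) (hb : 0 < b) (hkey : b * c + a * d < 2 * a * b)
    {X Y s X' Y' s' : ℕ} (hdeg : X' + Y' + 2 * s' = X + Y + 2 * s)
    (hx : a * X' + c * s' ≤ a * X + c * s) (hy : b * Y' + d * s' ≤ b * Y + d * s) :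
    s ≤ s' ∧ (s = s' → X' = X ∧ Y' = Y) := by
  have hs : s ≤ s' := by
    by_contra! hlt
    obtain ⟨t, rfl⟩ := Nat.exists_eq_add_of_lt hlt
    have := congrArg (a * b * ·) hdeg
    nlinarith [Nat.mul_le_mul_left b hx, Nat.mul_le_mul_left a hy,
      Nat.mul_lt_mul_of_pos_right hkey (Nat.succ_pos t)]
  refine ⟨hs, fun hss => ?_⟩
  subst hss
  have hX : X' ≤ X := by nlinarith
  have hY : Y' ≤ Y := by nlinarith
  omega

theorem veronese_le_of_weight_lt (ha : 0 < a) (hb : 0 < b) (hc : 0 < c)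
    (hkey : b * c + a * d < 2 * a * b) {l r : ℕ}
    (hbound : ∀ s m, Admissible a b c d s m → l ≤ m ∧ m + 2 * r ≤ 2 * s + l)
    {X Y s X' Y' s' : ℕ} (hdeg : X' + Y' + 2 * s' = X + Y + 2 * s)
    (hx : a * X' + c * s' ≤ a * X + c * s) (hy : b * Y' + d * s' ≤ b * Y + d * s)
    (hne : ¬(a * X' + c * s' = a * X + c * s ∧ b * Y' + d * s' = b * Y + d * s)) :
    l ≤ X ∧ 2 * r ≤ l + Y := by
  obtain ⟨hss, heq⟩ := le_and_eq_of_weight_le ha hb hkey hdeg hx hy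
  obtain ⟨σ, rfl⟩ := Nat.exists_eq_add_of_le hss
  have hσ : 0 < σ := Nat.pos_of_ne_zero fun h0 => by
    subst h0
    obtain ⟨rfl, rfl⟩ := heq rfl
    exact hne ⟨rfl, rfl⟩
  have hXX : X' < X := by nlinarith
  obtain ⟨m, rfl⟩ := Nat.exists_eq_add_of_lt hXX
  have hY : Y' + 2 * σ = Y + (m + 1) := by omega
  have := hbound σ (m + 1) ⟨hσ, by omega, by nlinarith, by nlinarith⟩
  omega

end Admissible

section GenExp

variable (a b c d : ℕ)

noncomputable def genExp : Fin 4 → Fin 2 →₀ ℕ :=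
  ![single 0 (2 * a), single 0 a + single 1 b, single 0 c + single 1 d, single 1 (2 * b)]

theorem linearCombination_genExp_apply_zero (γ : Fin 4 →₀ ℕ) :
    linearCombination ℕ (genExp a b c d) γ 0 = a * (2 * γ 0 + γ 1) + c * γ 2 := by
  rw [linearCombination_apply, Finsupp.sum_fintype _ _ (by simp), Finsupp.finsetSum_apply,
    Fin.sum_univ_four]
  simp [genExp]
  ring

theorem linearCombination_genExp_apply_one (γ : Fin 4 →₀ ℕ) :
    linearCombination ℕ (genExp a b c d) γ 1 = b * (γ 1 + 2 * γ 3) + d * γ 2 := by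
  rw [linearCombination_apply, Finsupp.sum_fintype _ _ (by simp), Finsupp.finsetSum_apply,
    Fin.sum_univ_four]
  simp [genExp]
  ring

theorem degree_fin_four (γ : Fin 4 →₀ ℕ) : γ.degree = γ 0 + γ 1 + γ 2 + γ 3 := by
  rw [degree_eq_sum, Fin.sum_univ_four]

variable {a b c d} in
theorem linearCombination_genExp_single_two_lt (hkey : b * c + a * d < 2 * a * b) {i j k : ℕ}
    (h : Admissible a b c d (i + j + k) (2 * i + j)) :
    linearCombination ℕ (genExp a b c d) (single 2 (i + j + k)) <
      linearCombination ℕ (genExp a b c d) (equivFunOnFinite.symm ![i, j, 0, k]) := by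
  obtain ⟨hr, -, hcl, hbl⟩ := h
  refine lt_of_le_of_ne (fun n => ?_) fun heq => ?_
  · fin_cases n <;>
      simp only [Fin.zero_eta, Fin.mk_one, linearCombination_genExp_apply_zero,
        linearCombination_genExp_apply_one] <;> simp
    · exact hcl
    · nlinarith
  · have h0 := congrArg (· 0) heq
    have h1 := congrArg (· 1) heq
    simp only [linearCombination_genExp_apply_zero, linearCombination_genExp_apply_one] at h0 h1
    simp at h0 h1
    nlinarith [Nat.mul_lt_mul_of_pos_right hkey hr]

end GenExp

section Quadric

variable {K : Type*} [CommRing K]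

theorem monomial_fin_four (α : Fin 4 →₀ ℕ) (c : K) :
    monomial α c = C c * X 0 ^ α 0 * X 1 ^ α 1 * X 2 ^ α 2 * X 3 ^ α 3 := by
  rw [monomial_eq, Finsupp.prod_fintype _ _ (by simp), Fin.prod_univ_four]
  ring

theorem exists_monomial_sub_mem_span_quadric (α : Fin 4 →₀ ℕ) :
    ∃ β : Fin 4 →₀ ℕ, β 1 ≤ 1 ∧ β.degree = α.degree ∧ ∀ c : K,
      monomial α c - monomial β c ∈
        Ideal.span {(X 1 ^ 2 - X 0 * X 3 : MvPolynomial (Fin 4) K)} := by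
  set q := α 1 / 2
  refine ⟨equivFunOnFinite.symm ![α 0 + q, α 1 % 2, α 2, α 3 + q], by simp; omega, ?_, fun c => ?_⟩
  · simp [degree_eq_sum, Fin.sum_univ_four]
    omega
  · rw [Ideal.mem_span_singleton, monomial_fin_four, monomial_fin_four]
    simp only [equivFunOnFinite_symm_apply_apply, Matrix.cons_val]
    set n := α 1 % 2
    have h1 : α 1 = n + 2 * q := (Nat.mod_add_div _ _).symm
    have heq : C c * X 0 ^ α 0 * X 1 ^ α 1 * X 2 ^ α 2 * X 3 ^ α 3 -
        C c * X 0 ^ (α 0 + q) * X 1 ^ n * X 2 ^ α 2 * X 3 ^ (α 3 + q) =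
        C c * X 0 ^ α 0 * X 1 ^ n * X 2 ^ α 2 * X 3 ^ α 3 *
          ((X 1 ^ 2) ^ q - (X 0 * X 3) ^ q : MvPolynomial (Fin 4) K) := by
      rw [h1]; ring
    rw [heq]
    exact (sub_dvd_pow_sub_pow _ _ q).mul_left _

theorem monomial_mem_span_of_le {i j k : ℕ} (hj : j ≤ 1) {β : Fin 4 →₀ ℕ} (hβ : β 1 ≤ 1)
    (h0 : 2 * i + j ≤ 2 * β 0 + β 1) (h3 : 2 * k + j ≤ β 1 + 2 * β 3) (c : K) :
    monomial β c ∈ Ideal.span {X 1 ^ 2 - X 0 * X 3, X 0 ^ i * X 1 ^ j * X 3 ^ k} := by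
  have hP : X 1 ^ 2 - X 0 * X 3 ∈
      Ideal.span {X 1 ^ 2 - X 0 * X 3, (X 0 ^ i * X 1 ^ j * X 3 ^ k : MvPolynomial (Fin 4) K)} :=
    Ideal.subset_span (by simp)
  have hQ : X 0 ^ i * X 1 ^ j * X 3 ^ k ∈
      Ideal.span {X 1 ^ 2 - X 0 * X 3, (X 0 ^ i * X 1 ^ j * X 3 ^ k : MvPolynomial (Fin 4) K)} :=
    Ideal.subset_span (by simp)
  rw [monomial_fin_four]
  generalize β 0 = p, β 1 = q, β 3 = t at *
  rcases (show j ≤ q ∨ (j = 1 ∧ q = 0) by omega) with hjq | ⟨rfl, rfl⟩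
  · obtain ⟨p, rfl⟩ := Nat.exists_eq_add_of_le (show i ≤ p by omega)
    obtain ⟨q, rfl⟩ := Nat.exists_eq_add_of_le hjq
    obtain ⟨t, rfl⟩ := Nat.exists_eq_add_of_le (show k ≤ t by omega)
    convert Ideal.mul_mem_left _ (C c * X 0 ^ p * X 1 ^ q * X 2 ^ β 2 * X 3 ^ t) hQ using 1
    ring
  · obtain ⟨p, rfl⟩ := Nat.exists_eq_add_of_le (show i + 1 ≤ p by omega)
    obtain ⟨t, rfl⟩ := Nat.exists_eq_add_of_le (show k + 1 ≤ t by omega)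
    convert sub_mem (Ideal.mul_mem_left _ (C c * X 0 ^ p * X 1 * X 2 ^ β 2 * X 3 ^ t) hQ)
      (Ideal.mul_mem_left _ (C c * X 0 ^ (i + p) * X 2 ^ β 2 * X 3 ^ (k + t)) hP) using 1
    ring

theorem exists_sub_mem_span_of_isHomogeneous {i j k e : ℕ} (hj : j ≤ 1)
    {g : MvPolynomial (Fin 4) K} (hg : g.IsHomogeneous e) :
    ∃ h : MvPolynomial (Fin 4) K, h.IsHomogeneous e ∧
      g - h ∈ Ideal.span {X 1 ^ 2 - X 0 * X 3, X 0 ^ i * X 1 ^ j * X 3 ^ k} ∧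
      ∀ β ∈ h.support, β 1 ≤ 1 ∧ ¬(2 * i + j ≤ 2 * β 0 + β 1 ∧ 2 * k + j ≤ β 1 + 2 * β 3) := by
  classical
  choose β hβ1 hβdeg hβmem using exists_monomial_sub_mem_span_quadric (K := K)
  have hPG : Ideal.span {(X 1 ^ 2 - X 0 * X 3 : MvPolynomial (Fin 4) K)} ≤
      Ideal.span {X 1 ^ 2 - X 0 * X 3, X 0 ^ i * X 1 ^ j * X 3 ^ k} :=
    Ideal.span_mono (by simp)
  -- Reduce each monomial modulo the quadric and drop those that then lie in the ideal.
  refine ⟨∑ α ∈ g.support, if 2 * i + j ≤ 2 * β α 0 + β α 1 ∧ 2 * k + j ≤ β α 1 + 2 * β α 3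
    then 0 else monomial (β α) (coeff α g), ?_, ?_, ?_⟩
  · refine IsHomogeneous.sum _ _ _ fun α hα => ?_
    split_ifs
    · exact isHomogeneous_zero _ _ _
    · exact isHomogeneous_monomial _ ((hβdeg α).trans (hg.degree_of_mem_support hα))
  · nth_rw 1 [← support_sum_monomial_coeff g]
    rw [← Finset.sum_sub_distrib]
    refine Ideal.sum_mem _ fun α _ => ?_
    split_ifs with hD
    · rw [sub_zero, ← sub_add_cancel (monomial α (coeff α g)) (monomial (β α) (coeff α g))]
      exact add_mem (hPG (hβmem α _)) (monomial_mem_span_of_le hj (hβ1 α) hD.1 hD.2 _)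
    · exact hPG (hβmem α _)
  · intro γ hγ
    obtain ⟨α, -, hα⟩ := Finset.mem_biUnion.mp (support_sum hγ)
    split_ifs at hα with hD
    · simp at hα
    · obtain rfl := Finset.mem_singleton.mp (support_monomial_subset hα)
      exact ⟨hβ1 α, hD⟩

end Quadric

section FiberCone

variable {K : Type*} [CommRing K] {a b c d : ℕ}

theorem aeval_quadric :
    aeval (fun n => monomial (genExp a b c d n) (1 : K))
      (X 1 ^ 2 - X 0 * X 3 : MvPolynomial (Fin 4) K) = 0 := by
  simp [genExp, monomial_pow, monomial_mul]

theorem injOn_linearCombination_genExp (ha : 0 < a) (hb : 0 < b)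
    (hkey : b * c + a * d < 2 * a * b) (e : ℕ) :
    Set.InjOn (linearCombination ℕ (genExp a b c d)) {γ | γ 1 ≤ 1 ∧ γ.degree = e} := by
  intro γ ⟨hγ1, hγ⟩ γ' ⟨hγ'1, hγ'⟩ heq
  have h0 := congrArg (· 0) heq
  have h1 := congrArg (· 1) heq
  simp only [linearCombination_genExp_apply_zero, linearCombination_genExp_apply_one] at h0 h1
  rw [degree_fin_four] at hγ hγ'
  have hdeg : (2 * γ 0 + γ 1) + (γ 1 + 2 * γ 3) + 2 * γ 2 =
      (2 * γ' 0 + γ' 1) + (γ' 1 + 2 * γ' 3) + 2 * γ' 2 := by omega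
  obtain ⟨hle, hXY⟩ := le_and_eq_of_weight_le ha hb hkey hdeg h0.le h1.le
  obtain ⟨hge, -⟩ := le_and_eq_of_weight_le ha hb hkey hdeg.symm h0.ge h1.ge
  obtain ⟨hX, hY⟩ := hXY (le_antisymm hle hge)
  ext n
  fin_cases n <;> simp <;> omega

theorem eq_zero_of_aeval_mem_of_reduced (ha : 0 < a) (hb : 0 < b) (hc : 0 < c)
    (hkey : b * c + a * d < 2 * a * b) {l r e : ℕ}
    (hbound : ∀ s m, Admissible a b c d s m → l ≤ m ∧ m + 2 * r ≤ 2 * s + l)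
    {h : MvPolynomial (Fin 4) K}
    (hh : ∀ β ∈ h.support, β 1 ≤ 1 ∧ β.degree = e ∧
      ¬(l ≤ 2 * β 0 + β 1 ∧ 2 * r ≤ l + (β 1 + 2 * β 3)))
    (hmem : aeval (fun n => monomial (genExp a b c d n) (1 : K)) h ∈ Ideal.span (Set.range X) *
      Ideal.span (Set.range fun n => monomial (genExp a b c d n) 1) ^ e) :
    h = 0 := by
  by_contra hne
  obtain ⟨γ, hγ⟩ := support_nonempty.mpr hne
  obtain ⟨hγ1, hγdeg, hγstd⟩ := hh γ hγ
  have hinj : Set.InjOn (linearCombination ℕ (genExp a b c d)) h.support :=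
    (injOn_linearCombination_genExp ha hb hkey e).mono fun β hβ =>
      And.intro (hh β hβ).1 (hh β hβ).2.1
  have hW : linearCombination ℕ (genExp a b c d) γ ∈
      (aeval (fun n => monomial (genExp a b c d n) (1 : K)) h).support := by
    rw [MvPolynomial.mem_support_iff, coeff_aeval_of_injOn _ hinj hγ]
    exact MvPolynomial.mem_support_iff.mp hγ
  obtain ⟨γ', hγ'deg, hlt⟩ := exists_lt_of_mem_span_X_mul_pow _ hmem _ hW
  obtain ⟨hle, hne⟩ := lt_iff_le_and_ne.mp hlt
  have hx := hle 0
  have hy := hle 1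
  simp only [linearCombination_genExp_apply_zero, linearCombination_genExp_apply_one] at hx hy
  rw [degree_fin_four] at hγdeg hγ'deg
  refine hγstd (veronese_le_of_weight_lt ha hb hc hkey hbound (by omega) hx hy fun ⟨h0, h1⟩ => ?_)
  refine hne (Finsupp.ext fun n => ?_)
  fin_cases n
  · simpa [linearCombination_genExp_apply_zero] using h0
  · simpa [linearCombination_genExp_apply_one] using h1

theorem fiberIdeal_eq_span (ha : 0 < a) (hb : 0 < b) (hc : 0 < c)
    (hkey : b * c + a * d < 2 * a * b) {l r : ℕ} (hlr : l < r) (hrl : Admissible a b c d r l)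
    (hbound : ∀ s m, Admissible a b c d s m → l ≤ m ∧ m + 2 * r ≤ 2 * s + l)
    {J : Ideal (MvPolynomial (Fin 4) K)}
    (hJ : ∀ f, f ∈ J ↔ ∀ e, aeval (fun n => monomial (genExp a b c d n) (1 : K))
      (homogeneousComponent e f) ∈ Ideal.span (Set.range X) *
        Ideal.span (Set.range fun n => monomial (genExp a b c d n) 1) ^ e) :
    J = Ideal.span {X 1 ^ 2 - X 0 * X 3,
      X 0 ^ (l / 2) * X 1 ^ (l % 2) * X 3 ^ (r - l / 2 - l % 2)} := by
  set i := l / 2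
  set j := l % 2
  set k := r - i - j
  have hj : j ≤ 1 := by omega
  have hr : i + j + k = r := by omega
  have hPJ : X 1 ^ 2 - X 0 * X 3 ∈ J := by
    rw [mem_iff_aeval_mem_of_isHomogeneous hJ
      ((isHomogeneous_X_pow 1 2).sub ((isHomogeneous_X K 0).mul (isHomogeneous_X K 3))),
      aeval_quadric]
    exact zero_mem _
  have hQJ : X 0 ^ i * X 1 ^ j * X 3 ^ k ∈ J := by
    have hQ : (X 0 ^ i * X 1 ^ j * X 3 ^ k : MvPolynomial (Fin 4) K) =
        monomial (equivFunOnFinite.symm ![i, j, 0, k]) 1 := by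
      simp [monomial_fin_four]
    have hdeg : (equivFunOnFinite.symm ![i, j, 0, k]).degree = r := by
      simp [degree_fin_four]; omega
    have hlt := linearCombination_genExp_single_two_lt hkey (hr ▸ (by omega : 2 * i + j = l) ▸ hrl)
    rw [hQ, mem_iff_aeval_mem_of_isHomogeneous hJ (isHomogeneous_monomial _ hdeg),
      aeval_monomial_of_monomial, ← hr]
    simpa using monomial_mem_span_X_mul_pow _ hlt (1 : K)
  have hGJ : Ideal.span {X 1 ^ 2 - X 0 * X 3, X 0 ^ i * X 1 ^ j * X 3 ^ k} ≤ J := by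
    rw [Ideal.span_le, Set.insert_subset_iff, Set.singleton_subset_iff]
    exact ⟨hPJ, hQJ⟩
  refine le_antisymm (fun f hf => ?_) hGJ
  rw [← sum_homogeneousComponent f]
  refine Ideal.sum_mem _ fun e _ => ?_
  have hg := homogeneousComponent_isHomogeneous e f
  obtain ⟨h, hh, hgh, hstd⟩ := exists_sub_mem_span_of_isHomogeneous hj hg
  have hgJ := (mem_iff_aeval_mem_of_isHomogeneous hJ hg).mpr ((hJ f).mp hf e)
  have hhJ : h ∈ J := by simpa using sub_mem hgJ (hGJ hgh)
  have h0 : h = 0 := eq_zero_of_aeval_mem_of_reduced ha hb hc hkey hbound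
    (fun β hβ => ⟨(hstd β hβ).1, hh.degree_of_mem_support hβ, fun hD => (hstd β hβ).2 (by omega)⟩)
    ((mem_iff_aeval_mem_of_isHomogeneous hJ hh).mp hhJ)
  simpa [h0] using hgh

end FiberCone

theorem ite_even_div_two (l : ℕ) : (if Even l then l / 2 else (l - 1) / 2) = l / 2 := by
  split_ifs with h
  · rfl
  · rw [Nat.not_even_iff_odd] at h
    obtain ⟨m, rfl⟩ := h
    omega

theorem ite_even_zero_one (l : ℕ) : (if Even l then 0 else 1) = l % 2 := by
  split_ifs with h
  · exact (Nat.even_iff.mp h).symm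
  · exact (Nat.odd_iff.mp (Nat.not_even_iff_odd.mp h)).symm

theorem stmt_18_general {K : Type*} [Field K] (a b c d : ℕ)
    (ha : 0 < a) (hb : 0 < b) (hc : 0 < c)
    (hbd1 : b < d) (hd2b : d < 2 * b)
    (u : Fin 4 → MvPolynomial (Fin 2) K)
    (hu0 : u 0 = X 0 ^ (2 * a)) (hu1 : u 1 = X 0 ^ a * X 1 ^ b)
    (hu2 : u 2 = X 0 ^ c * X 1 ^ d) (hu3 : u 3 = X 1 ^ (2 * b))
    (I mm : Ideal (MvPolynomial (Fin 2) K))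
    (hI : I = Ideal.span {u 0, u 1, u 2, u 3})
    (hmm : mm = Ideal.span {(X 0 : MvPolynomial (Fin 2) K), X 1})
    (J : Ideal (MvPolynomial (Fin 4) K))
    (hJ : ∀ f : MvPolynomial (Fin 4) K,
      f ∈ J ↔ ∀ e : ℕ, aeval u (homogeneousComponent e f) ∈ mm * I ^ e)
    (hkey : b * c + a * d < 2 * a * b) :
    {s : ℕ | 1 ≤ s ∧ ∃ l : ℕ, 0 < l ∧ c * s ≤ a * l ∧ b * l ≤ (2 * b - d) * s}.Nonempty ∧
    ∃ l : ℕ, 0 < l ∧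
      c * sInf {s : ℕ | 1 ≤ s ∧ ∃ l : ℕ, 0 < l ∧ c * s ≤ a * l ∧ b * l ≤ (2 * b - d) * s} ≤ a * l ∧
      b * l ≤ (2 * b - d) * sInf {s : ℕ | 1 ≤ s ∧ ∃ l : ℕ, 0 < l ∧ c * s ≤ a * l ∧ b * l ≤ (2 * b - d) * s} ∧
      (let r : ℕ := sInf {s : ℕ | 1 ≤ s ∧ ∃ l : ℕ, 0 < l ∧ c * s ≤ a * l ∧ b * l ≤ (2 * b - d) * s};
       let i : ℕ := if Even l then l / 2 else (l - 1) / 2;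
       let j : ℕ := if Even l then 0 else 1;
       i + j ≤ r ∧
       J = Ideal.span {(X 1 : MvPolynomial (Fin 4) K) ^ 2 - X 0 * X 3,
         X 0 ^ i * X 1 ^ j * X 3 ^ (r - i - j)}) := by
  have hu : u = fun n => monomial (genExp a b c d n) 1 := by
    funext n
    fin_cases n <;> simp [hu0, hu1, hu2, hu3, genExp, X_pow_eq_monomial, monomial_mul]
  have hI' : I = Ideal.span (Set.range u) := by
    rw [hI]
    congr 1
    ext x
    simp [Fin.exists_fin_succ, eq_comm]
  have hmm' : mm = Ideal.span (Set.range X) := by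
    rw [hmm]
    congr 1
    ext x
    simp [Fin.exists_fin_succ, eq_comm]
  subst hI' hmm' hu
  rw [setOf_admissible_eq hd2b.le]
  have hne : {s | ∃ l, Admissible a b c d s l}.Nonempty := ⟨_, _, admissible_mul ha hb hkey⟩
  obtain ⟨l, hrl⟩ := Nat.sInf_mem hne
  set r := sInf {s | ∃ l, Admissible a b c d s l}
  have hmin : ∀ s m, Admissible a b c d s m → r ≤ s := fun s m h => Nat.sInf_le ⟨m, h⟩
  have hlr := hrl.lt hbd1
  refine ⟨hne, l, hrl.2.1, hrl.2.2.1, (le_sub_mul_iff hd2b.le).mpr hrl.2.2.2, ?_⟩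
  simp only [ite_even_div_two, ite_even_zero_one]
  exact ⟨by omega,
    fiberIdeal_eq_span ha hb hc hkey hlr hrl (fun s m h => hrl.bounds hmin hbd1 h) hJ⟩

theorem stmt_18 {K : Type*} [Field K] (a b c d : ℕ)
    (ha : 0 < a) (hb : 0 < b) (hc : 0 < c) (hd : 0 < d)
    (hac : Nat.gcd a c = 1) (hbd : Nat.gcd b d = 1)
    (hba : a ≤ b) (hca : c < a) (hbd1 : b < d) (hd2b : d < 2 * b)
    (u : Fin 4 → MvPolynomial (Fin 2) K)
    (hu0 : u 0 = X 0 ^ (2 * a)) (hu1 : u 1 = X 0 ^ a * X 1 ^ b)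
    (hu2 : u 2 = X 0 ^ c * X 1 ^ d) (hu3 : u 3 = X 1 ^ (2 * b))
    (I mm : Ideal (MvPolynomial (Fin 2) K))
    (hI : I = Ideal.span {u 0, u 1, u 2, u 3})
    (hmm : mm = Ideal.span {(X 0 : MvPolynomial (Fin 2) K), X 1})
    (J : Ideal (MvPolynomial (Fin 4) K))
    (hJ : ∀ f : MvPolynomial (Fin 4) K,
      f ∈ J ↔ ∀ e : ℕ, aeval u (homogeneousComponent e f) ∈ mm * I ^ e)
    (hkey : b * c + a * d < 2 * a * b) :
    {s : ℕ | 1 ≤ s ∧ ∃ l : ℕ, 0 < l ∧ c * s ≤ a * l ∧ b * l ≤ (2 * b - d) * s}.Nonempty ∧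
    ∃ l : ℕ, 0 < l ∧
      c * sInf {s : ℕ | 1 ≤ s ∧ ∃ l : ℕ, 0 < l ∧ c * s ≤ a * l ∧ b * l ≤ (2 * b - d) * s} ≤ a * l ∧
      b * l ≤ (2 * b - d) * sInf {s : ℕ | 1 ≤ s ∧ ∃ l : ℕ, 0 < l ∧ c * s ≤ a * l ∧ b * l ≤ (2 * b - d) * s} ∧
      (let r : ℕ := sInf {s : ℕ | 1 ≤ s ∧ ∃ l : ℕ, 0 < l ∧ c * s ≤ a * l ∧ b * l ≤ (2 * b - d) * s};
       let i : ℕ := if Even l then l / 2 else (l - 1) / 2;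
       let j : ℕ := if Even l then 0 else 1;
       i + j ≤ r ∧
       J = Ideal.span {(X 1 : MvPolynomial (Fin 4) K) ^ 2 - X 0 * X 3,
         X 0 ^ i * X 1 ^ j * X 3 ^ (r - i - j)}) :=
  stmt_18_general a b c d ha hb hc hbd1 hd2b u hu0 hu1 hu2 hu3 I mm hI hmm J hJ hkey
end

section
/- Assume b·c + a·d = 2·a·b. Set i = c/2 and j = 0 if c is even, and i = (c−1)/2 and j = 1 if c is odd. Then J = (z_2^2 − z_1·z_4, z_3^a − z_1^i·z_2^j·z_4^{a−i−j}). In particular J is generated by 2 elements (a complete intersection). -/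
open MvPolynomial

namespace Stmt19

variable {K : Type*} [Field K]

/-- Ideal of polynomials all of whose monomials have weight ≥ W, weight (p,q) = b*p + a*q. -/
def Mideal (K : Type*) [Field K] (a b W : ℕ) : Ideal (MvPolynomial (Fin 2) K) where
  carrier := {h | ∀ d ∈ h.support, W ≤ b * d 0 + a * d 1}
  zero_mem' := by simp
  add_mem' := by
    intro p q hp hq d hd
    rcases Finset.mem_union.mp (MvPolynomial.support_add hd) with h | h
    · exact hp d h
    · exact hq d h
  smul_mem' := by
    intro p h hh d hd
    have := MvPolynomial.support_mul p h hd
    rw [Finset.mem_add] at this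
    obtain ⟨d1, hd1, d2, hd2, rfl⟩ := this
    have := hh d2 hd2
    simp only [Finsupp.add_apply]
    nlinarith [Nat.zero_le (b * d1 0), Nat.zero_le (a * d1 1)]

lemma mem_Mideal {a b W : ℕ} {p : MvPolynomial (Fin 2) K} :
    p ∈ Mideal K a b W ↔ ∀ d ∈ p.support, W ≤ b * d 0 + a * d 1 := Iff.rfl

lemma mul_mem_Mideal {a b W1 W2 : ℕ} {p q : MvPolynomial (Fin 2) K}
    (hp : p ∈ Mideal K a b W1) (hq : q ∈ Mideal K a b W2) :
    p * q ∈ Mideal K a b (W1 + W2) := by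
  intro d hd
  have := MvPolynomial.support_mul p q hd
  rw [Finset.mem_add] at this
  obtain ⟨d1, hd1, d2, hd2, rfl⟩ := this
  have h1 := hp d1 hd1
  have h2 := hq d2 hd2
  simp only [Finsupp.add_apply]
  nlinarith

lemma Mideal_anti {a b W W' : ℕ} (h : W' ≤ W) : Mideal K a b W ≤ Mideal K a b W' :=
  fun _ hp d hd => le_trans h (hp d hd)

lemma Xpow_mul_Xpow (p q : ℕ) : (X 0 ^ p * X 1 ^ q : MvPolynomial (Fin 2) K)
    = monomial (Finsupp.single 0 p + Finsupp.single 1 q) 1 := by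
  rw [X_pow_eq_monomial, X_pow_eq_monomial, monomial_mul, one_mul]

lemma mem_support_Xpow {p q : ℕ} {d : Fin 2 →₀ ℕ}
    (hd : d ∈ ((X 0 ^ p * X 1 ^ q : MvPolynomial (Fin 2) K)).support) :
    d 0 = p ∧ d 1 = q := by
  classical
  rw [Xpow_mul_Xpow, support_monomial] at hd
  rw [if_neg one_ne_zero, Finset.mem_singleton] at hd
  subst hd
  simp

lemma Xpow_mem_Mideal {a b W p q : ℕ} (h : W ≤ b * p + a * q) :
    (X 0 ^ p * X 1 ^ q : MvPolynomial (Fin 2) K) ∈ Mideal K a b W := by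
  intro d hd
  obtain ⟨h0, h1⟩ := mem_support_Xpow hd
  rw [h0, h1]; exact h


def Pexp (a c : ℕ) (k : Fin 4 →₀ ℕ) : ℕ := 2*a*(k 0) + a*(k 1) + c*(k 2)
def Qexp (b d : ℕ) (k : Fin 4 →₀ ℕ) : ℕ := b*(k 1) + d*(k 2) + 2*b*(k 3)

noncomputable def psi (a b c d : ℕ) (k : Fin 4 →₀ ℕ) : Fin 2 →₀ ℕ :=
  Finsupp.single 0 (Pexp a c k) + Finsupp.single 1 (Qexp b d k)

lemma psi_apply0 (a b c d : ℕ) (k : Fin 4 →₀ ℕ) : psi a b c d k 0 = Pexp a c k := by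
  simp [psi]

lemma psi_apply1 (a b c d : ℕ) (k : Fin 4 →₀ ℕ) : psi a b c d k 1 = Qexp b d k := by
  simp [psi]

lemma wt_psi (a b c d : ℕ) (hkey : b * c + a * d = 2 * a * b) (k : Fin 4 →₀ ℕ) :
    b * (psi a b c d k 0) + a * (psi a b c d k 1) = 2*a*b*(k 0 + k 1 + k 2 + k 3) := by
  rw [psi_apply0, psi_apply1]
  have : b * Pexp a c k + a * Qexp b d k
      = 2*a*b*(k 0) + 2*a*b*(k 1) + (b*c + a*d)*(k 2) + 2*a*b*(k 3) := by
    unfold Pexp Qexp; ring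
  rw [this, hkey]; ring

lemma aeval_monomial_u (a b c d : ℕ) (u : Fin 4 → MvPolynomial (Fin 2) K)
    (hu0 : u 0 = X 0 ^ (2 * a)) (hu1 : u 1 = X 0 ^ a * X 1 ^ b)
    (hu2 : u 2 = X 0 ^ c * X 1 ^ d) (hu3 : u 3 = X 1 ^ (2 * b))
    (k : Fin 4 →₀ ℕ) (r : K) :
    aeval u (monomial k r) = C r * monomial (psi a b c d k) 1 := by
  rw [aeval_monomial]
  have h1 : (k.prod fun n e => u n ^ e) = ∏ n : Fin 4, u n ^ k n := Finsupp.prod_pow k _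
  rw [h1, Fin.prod_univ_four, hu0, hu1, hu2, hu3]
  have h2 : algebraMap K (MvPolynomial (Fin 2) K) r = C r := rfl
  rw [h2]
  congr 1
  have h3 : monomial (psi a b c d k) (1:K)
      = X 0 ^ (Pexp a c k) * X 1 ^ (Qexp b d k) := by
    rw [X_pow_eq_monomial, X_pow_eq_monomial, monomial_mul, one_mul]; rfl
  rw [h3]
  unfold Pexp Qexp
  ring

lemma psi_inj (a b c d : ℕ) (ha : 0 < a) (hb : 0 < b) (hac : Nat.gcd a c = 1)
    (k k' : Fin 4 →₀ ℕ) (hk1 : k 1 ≤ 1) (hk2 : k 2 < a) (hk1' : k' 1 ≤ 1) (hk2' : k' 2 < a)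
    (hpsi : psi a b c d k = psi a b c d k') : k = k' := by
  have hP : Pexp a c k = Pexp a c k' := by
    rw [← psi_apply0 a b c d k, ← psi_apply0 a b c d k', hpsi]
  have hQ : Qexp b d k = Qexp b d k' := by
    rw [← psi_apply1 a b c d k, ← psi_apply1 a b c d k', hpsi]
  clear hpsi
  unfold Pexp at hP
  unfold Qexp at hQ
  have hγ : k 2 = k' 2 := by
    have h2 : c * k 2 + a * (2 * k 0 + k 1) = c * k' 2 + a * (2 * k' 0 + k' 1) := by
      have e1 : ∀ x y z : ℕ, c * z + a * (2 * x + y) = 2*a*x + a*y + c*z := fun x y z => by ring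
      rw [e1, e1]; exact hP
    have h1 : c * k 2 ≡ c * k' 2 [MOD a] := by
      show (c * k 2) % a = (c * k' 2) % a
      calc (c * k 2) % a = (c * k 2 + a * (2 * k 0 + k 1)) % a :=
            (Nat.add_mul_mod_self_left _ _ _).symm
        _ = (c * k' 2 + a * (2 * k' 0 + k' 1)) % a := by rw [h2]
        _ = (c * k' 2) % a := Nat.add_mul_mod_self_left _ _ _
    have h3 : k 2 ≡ k' 2 [MOD a] := Nat.ModEq.cancel_left_of_coprime hac h1
    have h4 : k 2 % a = k' 2 % a := h3
    rwa [Nat.mod_eq_of_lt hk2, Nat.mod_eq_of_lt hk2'] at h4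
  have hβ : 2 * k 0 + k 1 = 2 * k' 0 + k' 1 := by
    have h4 : a * (2 * k 0 + k 1) = a * (2 * k' 0 + k' 1) := by
      have e1 : ∀ x y : ℕ, a * (2 * x + y) = 2*a*x + a*y := fun x y => by ring
      rw [e1, e1]
      rw [hγ] at hP
      omega
    exact Nat.eq_of_mul_eq_mul_left ha h4
  have hk1e : k 1 = k' 1 := by omega
  have hk0e : k 0 = k' 0 := by omega
  have hk3e : k 3 = k' 3 := by
    have h5 : (2*b) * k 3 = (2*b) * k' 3 := by
      rw [hγ, hk1e] at hQ
      have e1 : ∀ x : ℕ, 2*b*x = (2*b)*x := fun x => by ring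
      omega
    exact Nat.eq_of_mul_eq_mul_left (by omega) h5
  ext s
  fin_cases s <;> assumption


lemma ring_calc {R : Type*} [CommRing R] (a i j m : ℕ) (A B C D : R) (α β γ δ q r s t : ℕ)
    (h1 : B^2 = A*D) (h2 : C^a = A^i*B^j*D^m) (hγ : γ = q*a + r) (hβ : β + q*j = 2*s + t) :
    A^α * B^β * C^γ * D^δ = A^(α + q*i + s) * B^t * C^r * D^(δ + q*m + s) := by
  subst hγ
  have e1 : C^(q*a+r) = (C^a)^q * C^r := by rw [pow_add, mul_comm q a, pow_mul]
  rw [e1, h2]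
  calc A^α * B^β * ((A^i*B^j*D^m)^q * C^r) * D^δ
      = A^(α+q*i) * (B^β * B^(q*j)) * C^r * D^(δ+q*m) := by ring
    _ = A^(α+q*i) * B^(2*s+t) * C^r * D^(δ+q*m) := by rw [← pow_add, hβ]
    _ = A^(α+q*i) * ((B^2)^s * B^t) * C^r * D^(δ+q*m) := by
        rw [show B^(2*s+t) = (B^2)^s * B^t by rw [pow_add, pow_mul]]
    _ = A^(α+q*i) * ((A*D)^s * B^t) * C^r * D^(δ+q*m) := by rw [h1]
    _ = A^(α + q*i + s) * B^t * C^r * D^(δ + q*m + s) := by ring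

noncomputable def nfk (a i j m : ℕ) (k : Fin 4 →₀ ℕ) : Fin 4 →₀ ℕ :=
  Finsupp.equivFunOnFinite.symm
    ![k 0 + (k 2 / a) * i + (k 1 + (k 2 / a) * j) / 2,
      (k 1 + (k 2 / a) * j) % 2,
      k 2 % a,
      k 3 + (k 2 / a) * m + (k 1 + (k 2 / a) * j) / 2]

lemma nfk_apply (a i j m : ℕ) (k : Fin 4 →₀ ℕ) :
    nfk a i j m k 0 = k 0 + (k 2 / a) * i + (k 1 + (k 2 / a) * j) / 2
    ∧ nfk a i j m k 1 = (k 1 + (k 2 / a) * j) % 2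
    ∧ nfk a i j m k 2 = k 2 % a
    ∧ nfk a i j m k 3 = k 3 + (k 2 / a) * m + (k 1 + (k 2 / a) * j) / 2 := by
  refine ⟨?_, ?_, ?_, ?_⟩ <;> rfl

lemma nfk_norm (a i j m : ℕ) (ha : 0 < a) (k : Fin 4 →₀ ℕ) :
    nfk a i j m k 1 ≤ 1 ∧ nfk a i j m k 2 < a := by
  obtain ⟨-, h1, h2, -⟩ := nfk_apply a i j m k
  rw [h1, h2]
  exact ⟨by omega, Nat.mod_lt _ ha⟩

lemma monomial_eq_prod (k : Fin 4 →₀ ℕ) (r : K) :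
    monomial k r = C r * (X 0 ^ k 0 * X 1 ^ k 1 * X 2 ^ k 2 * X 3 ^ k 3) := by
  rw [monomial_eq]
  congr 1
  rw [Finsupp.prod_pow, Fin.prod_univ_four]

lemma monomial_sub_nf_mem (a i j m : ℕ) (k : Fin 4 →₀ ℕ) (r : K) :
    monomial k r - monomial (nfk a i j m k) r ∈
      Ideal.span {(X 1 : MvPolynomial (Fin 4) K) ^ 2 - X 0 * X 3,
        X 2 ^ a - X 0 ^ i * X 1 ^ j * X 3 ^ m} := by
  set S := Ideal.span {(X 1 : MvPolynomial (Fin 4) K) ^ 2 - X 0 * X 3,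
        X 2 ^ a - X 0 ^ i * X 1 ^ j * X 3 ^ m} with hS
  rw [← Ideal.Quotient.eq]
  set φ := Ideal.Quotient.mk S
  have h1 : φ (X 1) ^ 2 = φ (X 0) * φ (X 3) := by
    rw [← map_pow, ← map_mul, ← sub_eq_zero, ← map_sub]
    exact Ideal.Quotient.eq_zero_iff_mem.mpr (Ideal.subset_span (by left; rfl))
  have h2 : φ (X 2) ^ a = φ (X 0) ^ i * φ (X 1) ^ j * φ (X 3) ^ m := by
    rw [← map_pow, ← map_pow, ← map_pow, ← map_pow, ← map_mul, ← map_mul,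
      ← sub_eq_zero, ← map_sub]
    exact Ideal.Quotient.eq_zero_iff_mem.mpr (Ideal.subset_span (by right; rfl))
  obtain ⟨e0, e1, e2, e3⟩ := nfk_apply a i j m k
  have main : φ (X 0) ^ k 0 * φ (X 1) ^ k 1 * φ (X 2) ^ k 2 * φ (X 3) ^ k 3
      = φ (X 0) ^ (k 0 + (k 2 / a) * i + (k 1 + (k 2 / a) * j) / 2)
        * φ (X 1) ^ ((k 1 + (k 2 / a) * j) % 2) * φ (X 2) ^ (k 2 % a)
        * φ (X 3) ^ (k 3 + (k 2 / a) * m + (k 1 + (k 2 / a) * j) / 2) :=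
    ring_calc a i j m _ _ _ _ (k 0) (k 1) (k 2) (k 3) (k 2 / a) (k 2 % a)
      ((k 1 + (k 2 / a) * j) / 2) ((k 1 + (k 2 / a) * j) % 2) h1 h2 ((Nat.div_add_mod' (k 2) a).symm) (by omega)
  calc φ (monomial k r)
      = φ (C r) * (φ (X 0) ^ k 0 * φ (X 1) ^ k 1 * φ (X 2) ^ k 2 * φ (X 3) ^ k 3) := by
        rw [monomial_eq_prod]; simp only [map_mul, map_pow]
    _ = φ (C r) * (φ (X 0) ^ (k 0 + (k 2 / a) * i + (k 1 + (k 2 / a) * j) / 2)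
        * φ (X 1) ^ ((k 1 + (k 2 / a) * j) % 2) * φ (X 2) ^ (k 2 % a)
        * φ (X 3) ^ (k 3 + (k 2 / a) * m + (k 1 + (k 2 / a) * j) / 2)) := by rw [main]
    _ = φ (monomial (nfk a i j m k) r) := by
        rw [monomial_eq_prod]; simp only [map_mul, map_pow, e0, e1, e2, e3]

lemma degree_fin4 (dd : Fin 4 →₀ ℕ) : dd.degree = dd 0 + dd 1 + dd 2 + dd 3 := by
  rw [Finsupp.degree_apply]
  rw [Finset.sum_subset (Finset.subset_univ dd.support) (by intro x _ hx; simpa using hx)]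
  rw [Fin.sum_univ_four]

section Master

variable (a b c d : ℕ) (u : Fin 4 → MvPolynomial (Fin 2) K)

lemma I_pow_le (ha : 0 < a) (hb : 0 < b)
    (hu0 : u 0 = X 0 ^ (2 * a)) (hu1 : u 1 = X 0 ^ a * X 1 ^ b)
    (hu2 : u 2 = X 0 ^ c * X 1 ^ d) (hu3 : u 3 = X 1 ^ (2 * b))
    (I : Ideal (MvPolynomial (Fin 2) K)) (hI : I = Ideal.span {u 0, u 1, u 2, u 3})
    (hkey : b * c + a * d = 2 * a * b) (e : ℕ) :
    I ^ e ≤ Mideal K a b (2 * a * b * e) := by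
  have hIle : I ≤ Mideal K a b (2 * a * b) := by
    rw [hI, Ideal.span_le]
    intro p hp
    simp only [Set.mem_insert_iff, Set.mem_singleton_iff] at hp
    rcases hp with rfl | rfl | rfl | rfl
    · rw [hu0, show (X 0 ^ (2*a) : MvPolynomial (Fin 2) K) = X 0 ^ (2*a) * X 1 ^ 0 by ring]
      exact Xpow_mem_Mideal (by nlinarith)
    · rw [hu1]; exact Xpow_mem_Mideal (by nlinarith)
    · rw [hu2]; exact Xpow_mem_Mideal (by omega)
    · rw [hu3, show (X 1 ^ (2*b) : MvPolynomial (Fin 2) K) = X 0 ^ 0 * X 1 ^ (2*b) by ring]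
      exact Xpow_mem_Mideal (by nlinarith)
  induction e with
  | zero =>
    intro p _ d hd
    simp
  | succ e ih =>
    rw [pow_succ]
    refine le_trans (Ideal.mul_le.mpr ?_) (le_refl _)
    intro p hp q hq
    have := mul_mem_Mideal (ih hp) (hIle hq)
    exact Mideal_anti (by ring_nf; omega) this

lemma mmIe_le (ha : 0 < a) (hb : 0 < b)
    (hu0 : u 0 = X 0 ^ (2 * a)) (hu1 : u 1 = X 0 ^ a * X 1 ^ b)
    (hu2 : u 2 = X 0 ^ c * X 1 ^ d) (hu3 : u 3 = X 1 ^ (2 * b))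
    (I mm : Ideal (MvPolynomial (Fin 2) K)) (hI : I = Ideal.span {u 0, u 1, u 2, u 3})
    (hmm : mm = Ideal.span {(X 0 : MvPolynomial (Fin 2) K), X 1})
    (hkey : b * c + a * d = 2 * a * b) (e : ℕ) :
    mm * I ^ e ≤ Mideal K a b (2 * a * b * e + 1) := by
  have hmle : mm ≤ Mideal K a b 1 := by
    rw [hmm, Ideal.span_le]
    intro p hp
    simp only [Set.mem_insert_iff, Set.mem_singleton_iff] at hp
    rcases hp with rfl | rfl
    · rw [show (X 0 : MvPolynomial (Fin 2) K) = X 0 ^ 1 * X 1 ^ 0 by ring]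
      exact Xpow_mem_Mideal (by omega)
    · rw [show (X 1 : MvPolynomial (Fin 2) K) = X 0 ^ 0 * X 1 ^ 1 by ring]
      exact Xpow_mem_Mideal (by omega)
  refine Ideal.mul_le.mpr ?_
  intro p hp q hq
  have := mul_mem_Mideal (hmle hp) (I_pow_le a b c d u ha hb hu0 hu1 hu2 hu3 I hI hkey e hq)
  exact Mideal_anti (by omega) this


lemma key_zero (ha : 0 < a) (hb : 0 < b) (hac : Nat.gcd a c = 1)
    (hu0 : u 0 = X 0 ^ (2 * a)) (hu1 : u 1 = X 0 ^ a * X 1 ^ b)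
    (hu2 : u 2 = X 0 ^ c * X 1 ^ d) (hu3 : u 3 = X 1 ^ (2 * b))
    (I mm : Ideal (MvPolynomial (Fin 2) K)) (hI : I = Ideal.span {u 0, u 1, u 2, u 3})
    (hmm : mm = Ideal.span {(X 0 : MvPolynomial (Fin 2) K), X 1})
    (hkey : b * c + a * d = 2 * a * b) (e : ℕ) (g : MvPolynomial (Fin 4) K)
    (hhom : ∀ k ∈ g.support, k 0 + k 1 + k 2 + k 3 = e)
    (hnorm : ∀ k ∈ g.support, k 1 ≤ 1 ∧ k 2 < a)
    (hmem : aeval u g ∈ mm * I ^ e) : g = 0 := by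
  classical
  have hrep : aeval u g = ∑ k ∈ g.support, C (coeff k g) * monomial (psi a b c d k) (1:K) := by
    conv_lhs => rw [g.as_sum]
    rw [map_sum]
    exact Finset.sum_congr rfl fun k _ => aeval_monomial_u a b c d u hu0 hu1 hu2 hu3 k _
  have hzero : aeval u g = 0 := by
    rw [← support_eq_empty]
    apply Finset.eq_empty_of_forall_notMem
    intro dd hdd
    have hge : 2*a*b*e + 1 ≤ b * dd 0 + a * dd 1 :=
      mmIe_le a b c d u ha hb hu0 hu1 hu2 hu3 I mm hI hmm hkey e hmem dd hdd
    have hco : coeff dd (aeval u g) ≠ 0 := mem_support_iff.mp hdd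
    rw [hrep, coeff_sum] at hco
    obtain ⟨k, hk, hkc⟩ := Finset.exists_ne_zero_of_sum_ne_zero hco
    rw [coeff_C_mul, coeff_monomial] at hkc
    have hdd_eq : dd = psi a b c d k := by
      by_contra hne
      rw [if_neg (fun h => hne h.symm)] at hkc
      simp at hkc
    have hwt : b * dd 0 + a * dd 1 = 2*a*b*e := by
      rw [hdd_eq, wt_psi a b c d hkey k, hhom k hk]
    omega
  ext k0
  rw [coeff_zero]
  by_cases hk0 : k0 ∈ g.support
  · have hco : coeff (psi a b c d k0) (aeval u g) = coeff k0 g := by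
      rw [hrep, coeff_sum]
      rw [Finset.sum_eq_single k0]
      · rw [coeff_C_mul, coeff_monomial, if_pos rfl, mul_one]
      · intro k hk hne
        rw [coeff_C_mul, coeff_monomial]
        have : ¬ (psi a b c d k = psi a b c d k0) := by
          intro h
          exact hne (psi_inj a b c d ha hb hac k k0 (hnorm k hk).1 (hnorm k hk).2
            (hnorm k0 hk0).1 (hnorm k0 hk0).2 h)
        rw [if_neg this, mul_zero]
      · intro h; exact absurd hk0 h
    rw [← hco, hzero, coeff_zero]
  · exact notMem_support_iff.mp hk0


lemma span_le_J (i j m : ℕ) (ha : 0 < a) (hb : 0 < b)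
    (hij : 2 * i + j = c) (him : i + j + m = a)
    (hu0 : u 0 = X 0 ^ (2 * a)) (hu1 : u 1 = X 0 ^ a * X 1 ^ b)
    (hu2 : u 2 = X 0 ^ c * X 1 ^ d) (hu3 : u 3 = X 1 ^ (2 * b))
    (I mm : Ideal (MvPolynomial (Fin 2) K)) (hI : I = Ideal.span {u 0, u 1, u 2, u 3})
    (hmm : mm = Ideal.span {(X 0 : MvPolynomial (Fin 2) K), X 1})
    (J : Ideal (MvPolynomial (Fin 4) K))
    (hJ : ∀ f : MvPolynomial (Fin 4) K,
      f ∈ J ↔ ∀ e : ℕ, aeval u (homogeneousComponent e f) ∈ mm * I ^ e)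
    (hkey : b * c + a * d = 2 * a * b) :
    Ideal.span {(X 1 : MvPolynomial (Fin 4) K) ^ 2 - X 0 * X 3,
      X 2 ^ a - X 0 ^ i * X 1 ^ j * X 3 ^ m} ≤ J := by
  rw [Ideal.span_le]
  rintro p hp
  simp only [Set.mem_insert_iff, Set.mem_singleton_iff] at hp
  have haev1 : aeval u ((X 1 : MvPolynomial (Fin 4) K) ^ 2 - X 0 * X 3) = 0 := by
    simp only [map_sub, map_pow, map_mul, aeval_X, hu0, hu1, hu3]
    rw [sub_eq_zero]
    ring
  have haev2 : aeval u ((X 2 : MvPolynomial (Fin 4) K) ^ a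
      - X 0 ^ i * X 1 ^ j * X 3 ^ m) = 0 := by
    simp only [map_sub, map_pow, map_mul, aeval_X, hu0, hu1, hu2, hu3]
    rw [sub_eq_zero]
    have h1 : (X 0 ^ c * X 1 ^ d : MvPolynomial (Fin 2) K) ^ a
        = X 0 ^ (c * a) * X 1 ^ (d * a) := by ring
    have h2 : ((X 0 ^ (2*a) : MvPolynomial (Fin 2) K)) ^ i * (X 0 ^ a * X 1 ^ b) ^ j
        * (X 1 ^ (2*b)) ^ m = X 0 ^ (2*a*i + a*j) * X 1 ^ (b*j + 2*b*m) := by ring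
    have e1 : b * c = 2 * (b*i) + b*j := by rw [← hij]; ring
    have e2 : 2 * a * b = 2*(b*i) + 2*(b*j) + 2*(b*m) := by rw [← him]; ring
    have h3 : c * a = 2*a*i + a*j := by rw [← hij]; ring
    have h4 : d * a = b*j + 2*b*m := by nlinarith [hkey, e1, e2]
    rw [h1, h2, h3, h4]
  rcases hp with rfl | rfl
  · rw [SetLike.mem_coe, hJ]
    intro e
    have hhom : (X 1 : MvPolynomial (Fin 4) K) ^ 2 - X 0 * X 3
        ∈ homogeneousSubmodule (Fin 4) K 2 := by
      apply Submodule.sub_mem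
      · exact isHomogeneous_X_pow 1 2
      · simpa using (isHomogeneous_X K 0).mul (isHomogeneous_X K 3)
    rw [homogeneousComponent_of_mem hhom]
    by_cases he : e = 2
    · rw [if_pos he, haev1]; exact zero_mem _
    · rw [if_neg he, map_zero]; exact zero_mem _
  · rw [SetLike.mem_coe, hJ]
    intro e
    have hhom : (X 2 : MvPolynomial (Fin 4) K) ^ a - X 0 ^ i * X 1 ^ j * X 3 ^ m
        ∈ homogeneousSubmodule (Fin 4) K a := by
      apply Submodule.sub_mem
      · exact isHomogeneous_X_pow 2 a
      · rw [mem_homogeneousSubmodule, ← him]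
        exact ((isHomogeneous_X_pow 0 i).mul (isHomogeneous_X_pow 1 j)).mul
          (isHomogeneous_X_pow 3 m)
    rw [homogeneousComponent_of_mem hhom]
    by_cases he : e = a
    · rw [if_pos he, haev2]; exact zero_mem _
    · rw [if_neg he, map_zero]; exact zero_mem _

lemma master (i j m : ℕ) (ha : 0 < a) (hb : 0 < b) (hac : Nat.gcd a c = 1)
    (hij : 2 * i + j = c) (him : i + j + m = a)
    (hu0 : u 0 = X 0 ^ (2 * a)) (hu1 : u 1 = X 0 ^ a * X 1 ^ b)
    (hu2 : u 2 = X 0 ^ c * X 1 ^ d) (hu3 : u 3 = X 1 ^ (2 * b))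
    (I mm : Ideal (MvPolynomial (Fin 2) K)) (hI : I = Ideal.span {u 0, u 1, u 2, u 3})
    (hmm : mm = Ideal.span {(X 0 : MvPolynomial (Fin 2) K), X 1})
    (J : Ideal (MvPolynomial (Fin 4) K))
    (hJ : ∀ f : MvPolynomial (Fin 4) K,
      f ∈ J ↔ ∀ e : ℕ, aeval u (homogeneousComponent e f) ∈ mm * I ^ e)
    (hkey : b * c + a * d = 2 * a * b) :
    J = Ideal.span {(X 1 : MvPolynomial (Fin 4) K) ^ 2 - X 0 * X 3,
      X 2 ^ a - X 0 ^ i * X 1 ^ j * X 3 ^ m} := by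
  classical
  have hSJ := span_le_J a b c d u i j m ha hb hij him hu0 hu1 hu2 hu3 I mm hI hmm J hJ hkey
  refine le_antisymm ?_ hSJ
  intro f hf
  set F : MvPolynomial (Fin 4) K :=
    ∑ k ∈ f.support, monomial (nfk a i j m k) (coeff k f) with hF
  have hdiff : f - F ∈ Ideal.span {(X 1 : MvPolynomial (Fin 4) K) ^ 2 - X 0 * X 3,
      X 2 ^ a - X 0 ^ i * X 1 ^ j * X 3 ^ m} := by
    have hrepr : f - F = ∑ k ∈ f.support,
        (monomial k (coeff k f) - monomial (nfk a i j m k) (coeff k f)) := by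
      rw [Finset.sum_sub_distrib, ← hF]
      congr 1
      exact f.as_sum
    rw [hrepr]
    exact Ideal.sum_mem _ (fun k _ => monomial_sub_nf_mem a i j m k _)
  have hFJ : F ∈ J := by
    have h1 : F = f - (f - F) := by ring
    rw [h1]
    exact J.sub_mem hf (hSJ hdiff)
  have hFnorm : ∀ dd ∈ F.support, dd 1 ≤ 1 ∧ dd 2 < a := by
    intro dd hdd
    have hco := mem_support_iff.mp hdd
    rw [hF, coeff_sum] at hco
    obtain ⟨k, -, hkc⟩ := Finset.exists_ne_zero_of_sum_ne_zero hco
    rw [coeff_monomial] at hkc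
    have : dd = nfk a i j m k := by
      by_contra hne
      rw [if_neg (fun h => hne h.symm)] at hkc
      exact hkc rfl
    rw [this]
    exact nfk_norm a i j m ha k
  have hF0 : F = 0 := by
    have hcomp : ∀ e, homogeneousComponent e F = 0 := by
      intro e
      apply key_zero a b c d u ha hb hac hu0 hu1 hu2 hu3 I mm hI hmm hkey e
      · intro k hk
        have hcz := mem_support_iff.mp hk
        rw [coeff_homogeneousComponent] at hcz
        by_cases hdeg : k.degree = e
        · rw [← degree_fin4]; exact hdeg
        · rw [if_neg hdeg] at hcz; exact absurd rfl hcz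
      · intro k hk
        have hcz := mem_support_iff.mp hk
        rw [coeff_homogeneousComponent] at hcz
        have : coeff k F ≠ 0 := by
          intro h
          apply hcz
          split <;> simp [h]
        exact hFnorm k (mem_support_iff.mpr this)
      · exact (hJ F).mp hFJ e
    have hsum := sum_homogeneousComponent F
    rw [← hsum]
    apply Finset.sum_eq_zero
    intro e _
    exact hcomp e
  rw [hF0, sub_zero] at hdiff
  exact hdiff

end Master


end Stmt19

theorem stmt_19 {K : Type*} [Field K] (a b c d : ℕ)
    (ha : 0 < a) (hb : 0 < b) (hc : 0 < c) (hd : 0 < d)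
    (hac : Nat.gcd a c = 1) (hbd : Nat.gcd b d = 1)
    (hba : a ≤ b) (hca : c < a) (hbd1 : b < d) (hd2b : d < 2 * b)
    (u : Fin 4 → MvPolynomial (Fin 2) K)
    (hu0 : u 0 = X 0 ^ (2 * a)) (hu1 : u 1 = X 0 ^ a * X 1 ^ b)
    (hu2 : u 2 = X 0 ^ c * X 1 ^ d) (hu3 : u 3 = X 1 ^ (2 * b))
    (I mm : Ideal (MvPolynomial (Fin 2) K))
    (hI : I = Ideal.span {u 0, u 1, u 2, u 3})
    (hmm : mm = Ideal.span {(X 0 : MvPolynomial (Fin 2) K), X 1})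
    (J : Ideal (MvPolynomial (Fin 4) K))
    (hJ : ∀ f : MvPolynomial (Fin 4) K,
      f ∈ J ↔ ∀ e : ℕ, aeval u (homogeneousComponent e f) ∈ mm * I ^ e)
    (hkey : b * c + a * d = 2 * a * b) :
    (let i : ℕ := if Even c then c / 2 else (c - 1) / 2;
     let j : ℕ := if Even c then 0 else 1;
     J = Ideal.span {(X 1 : MvPolynomial (Fin 4) K) ^ 2 - X 0 * X 3,
       X 2 ^ a - X 0 ^ i * X 1 ^ j * X 3 ^ (a - i - j)}) := by
  set i : ℕ := if Even c then c / 2 else (c - 1) / 2 with hi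
  set j : ℕ := if Even c then 0 else 1 with hj
  show J = Ideal.span {(X 1 : MvPolynomial (Fin 4) K) ^ 2 - X 0 * X 3,
       X 2 ^ a - X 0 ^ i * X 1 ^ j * X 3 ^ (a - i - j)}
  have hij : 2 * i + j = c := by
    rcases Nat.even_or_odd c with hce | hco
    · have h2 := Nat.even_iff.mp hce
      rw [hi, hj, if_pos hce, if_pos hce]
      omega
    · have h2 := Nat.odd_iff.mp hco
      rw [hi, hj, if_neg (by rwa [← Nat.not_even_iff_odd] at hco),
        if_neg (by rwa [← Nat.not_even_iff_odd] at hco)]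
      omega
  have hija : i + j ≤ a := by
    rcases Nat.even_or_odd c with hce | hco
    · have h2 := Nat.even_iff.mp hce
      rw [hi, hj, if_pos hce, if_pos hce]
      omega
    · have h2 := Nat.odd_iff.mp hco
      rw [hi, hj, if_neg (by rwa [← Nat.not_even_iff_odd] at hco),
        if_neg (by rwa [← Nat.not_even_iff_odd] at hco)]
      omega
  exact Stmt19.master a b c d u i j (a - i - j) ha hb hac hij (by omega)
    hu0 hu1 hu2 hu3 I mm hI hmm J hJ hkey
end
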